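/- arXiv:1704.05486 — 13 statements merged into one kernel-verified Lean document; each statement's English description precedes it below -/
import Mathlib

section
/- Let k ≥ 2 be an integer and let A_1, …, A_k be nonempty compact sets in ℝ. Then Vol_1(A_1 + ⋯ + A_k) ≥ (1/(k−1)) · ∑_{i=1}^k Vol_1(∑_{j ∈ [k]∖{i}} A_j), where the sums of sets are Minkowski sums. -/
open MeasureTheory Finset
open scoped Pointwise ENNReal

lemma vol_add_singleton (T : Set ℝ) (a : ℝ) : volume (T + {a}) = volume T := by
  rw [Set.add_singleton]; simp [Set.image_add_right]

lemma sum_compact_nonempty {ι : Type*} (s : Finset ι) (A : ι → Set ℝ)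
    (hne : ∀ i, (A i).Nonempty) (hcpt : ∀ i, IsCompact (A i)) :
    IsCompact (∑ j ∈ s, A j) ∧ (∑ j ∈ s, A j).Nonempty := by
  induction s using Finset.cons_induction with
  | empty => simp [Set.zero_nonempty]
  | cons i s hi ih =>
    rw [Finset.sum_cons]
    exact ⟨(hcpt i).add ih.1, (hne i).add ih.2⟩

lemma sum_subset_Icc {k : ℕ} (A : Fin k → Set ℝ) (α m : Fin k → ℝ)
    (h : ∀ i, A i ⊆ Set.Icc (α i) (m i)) (s : Finset (Fin k)) :
    (∑ j ∈ s, A j) ⊆ Set.Icc (∑ j ∈ s, α j) (∑ j ∈ s, m j) := by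
  induction s using Finset.cons_induction with
  | empty =>
    intro x hx
    simp only [Finset.sum_empty] at hx ⊢
    rw [Set.mem_zero] at hx
    simp [hx]
  | cons i s hi ih =>
    rw [Finset.sum_cons, Finset.sum_cons, Finset.sum_cons]
    intro x hx
    rw [Set.mem_add] at hx
    obtain ⟨u, hu, v, hv, rfl⟩ := hx
    have h1 := h i hu
    have h2 := ih hv
    exact ⟨add_le_add h1.1 h2.1, add_le_add h1.2 h2.2⟩

lemma icc_split (c : ℕ → ℝ) :
    ∀ n, ∀ x ∈ Set.Icc (c 0) (c (n+1)), ∃ i ≤ n, x ∈ Set.Icc (c i) (c (i+1)) := by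
  intro n
  induction n with
  | zero => intro x hx; exact ⟨0, le_refl 0, hx⟩
  | succ n ih =>
    intro x hx
    by_cases h : x ≤ c (n+1)
    · obtain ⟨i, hi, hmem⟩ := ih x ⟨hx.1, h⟩
      exact ⟨i, Nat.le_succ_of_le hi, hmem⟩
    · exact ⟨n+1, le_refl _, ⟨le_of_not_ge h, hx.2⟩⟩

/-- Core step: if `B + {a} ⊆ S` and `B + {b} ⊆ S` with `a ≤ b`, then
`vol B + vol (S ∩ (τ+a, τ+b)) ≤ vol S` for any `τ`. -/
lemma core_step {B S : Set ℝ} (hB : IsCompact B) (hS : IsCompact S) {a b τ : ℝ}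
    (hab : a ≤ b) (h1 : B + {a} ⊆ S) (h2 : B + {b} ⊆ S) :
    volume B + volume (S ∩ Set.Ioo (τ + a) (τ + b)) ≤ volume S := by
  set X := (B + {a}) ∩ Set.Iio (τ + a) with hX
  set Y := (B + {b}) ∩ Set.Ici (τ + b) with hY
  set Z := S ∩ Set.Ioo (τ + a) (τ + b) with hZ
  have hXeq : X = (B ∩ Set.Iio τ) + {a} := by
    ext x
    simp only [hX, Set.add_singleton, Set.mem_inter_iff, Set.mem_image, Set.mem_Iio]
    constructor
    · rintro ⟨⟨u, hu, rfl⟩, hlt⟩; exact ⟨u, ⟨hu, by linarith⟩, rfl⟩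
    · rintro ⟨u, ⟨hu, hlt⟩, rfl⟩; exact ⟨⟨u, hu, rfl⟩, by linarith⟩
  have hYeq : Y = (B ∩ Set.Ici τ) + {b} := by
    ext x
    simp only [hY, Set.add_singleton, Set.mem_inter_iff, Set.mem_image, Set.mem_Ici]
    constructor
    · rintro ⟨⟨u, hu, rfl⟩, hge⟩; exact ⟨u, ⟨hu, by linarith⟩, rfl⟩
    · rintro ⟨u, ⟨hu, hge⟩, rfl⟩; exact ⟨⟨u, hu, rfl⟩, by linarith⟩
  have hXvol : volume X = volume (B ∩ Set.Iio τ) := by rw [hXeq, vol_add_singleton]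
  have hYvol : volume Y = volume (B ∩ Set.Ici τ) := by rw [hYeq, vol_add_singleton]
  have hBsplit : volume (B ∩ Set.Iio τ) + volume (B ∩ Set.Ici τ) = volume B := by
    have h := measure_inter_add_diff (μ := volume) B (measurableSet_Iio (a := τ))
    rwa [Set.diff_eq, Set.compl_Iio] at h
  have hXm : MeasurableSet X :=
    ((hB.add isCompact_singleton).measurableSet).inter measurableSet_Iio
  have hYm : MeasurableSet Y :=
    ((hB.add isCompact_singleton).measurableSet).inter measurableSet_Ici
  have hZm : MeasurableSet Z := hS.measurableSet.inter measurableSet_Ioo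
  have hXY : Disjoint X Y := by
    rw [Set.disjoint_left]
    rintro x ⟨_, hx1⟩ ⟨_, hx2⟩
    simp only [Set.mem_Iio] at hx1
    simp only [Set.mem_Ici] at hx2
    linarith
  have hXZ_Y : Disjoint (X ∪ Z) Y := by
    rw [Set.disjoint_left]
    rintro x hx ⟨_, hx2⟩
    simp only [Set.mem_Ici] at hx2
    rcases hx with ⟨_, hx1⟩ | ⟨_, hx1⟩
    · simp only [Set.mem_Iio] at hx1; linarith
    · exact absurd hx2 (not_le.2 (by exact hx1.2))
  have hXZ : Disjoint X Z := by
    rw [Set.disjoint_left]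
    rintro x ⟨_, hx1⟩ ⟨_, hx2⟩
    simp only [Set.mem_Iio] at hx1
    exact absurd hx2.1 (by linarith)
  have hsub : (X ∪ Z) ∪ Y ⊆ S := by
    apply Set.union_subset
    · apply Set.union_subset
      · exact (Set.inter_subset_left).trans h1
      · exact Set.inter_subset_left
    · exact (Set.inter_subset_left).trans h2
  calc volume B + volume Z
      = volume X + volume Z + volume Y := by
        rw [hXvol, hYvol, ← hBsplit]; ring
    _ = volume (X ∪ Z) + volume Y := by rw [measure_union hXZ hZm]
    _ = volume ((X ∪ Z) ∪ Y) := by rw [measure_union hXZ_Y hYm]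
    _ ≤ volume S := measure_mono hsub

/-- **Fractional superadditivity of the volume in dimension one** (Theorem 3.1 of
Fradelizi–Madiman–Marsiglietti–Zvavitch): if `k ≥ 2` and `A 1, …, A k` are nonempty
compact subsets of `ℝ`, then the Lebesgue measure of the Minkowski sum `∑ i, A i`
is at least `(k-1)⁻¹` times the sum of the measures of the leave-one-out Minkowski
sums `∑_{j ≠ i} A j`. -/
theorem volume_minkowski_sum_ge_leave_one_out_dim_one
    (k : ℕ) (hk : 2 ≤ k) (A : Fin k → Set ℝ)
    (hne : ∀ i, (A i).Nonempty) (hcpt : ∀ i, IsCompact (A i)) :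
    ((k : ℝ≥0∞) - 1)⁻¹ * ∑ i, volume (∑ j ∈ univ.erase i, A j) ≤ volume (∑ i, A i) := by
  -- least and greatest elements
  choose α hα using fun i => (hcpt i).exists_isLeast (hne i)
  choose m hm using fun i => (hcpt i).exists_isGreatest (hne i)
  have hab : ∀ i, α i ≤ m i := fun i => (hm i).2 (hα i).1
  set S : Set ℝ := ∑ i, A i with hSdef
  set T : Fin k → Set ℝ := fun i => ∑ j ∈ univ.erase i, A j with hTdef
  have hScpt : IsCompact S := (sum_compact_nonempty univ A hne hcpt).1
  have hTcpt : ∀ i, IsCompact (T i) := fun i =>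
    (sum_compact_nonempty (univ.erase i) A hne hcpt).1
  have hTA : ∀ i, T i + A i = S := fun i =>
    Finset.sum_erase_add univ A (Finset.mem_univ i)
  have hsub1 : ∀ i, T i + {α i} ⊆ S := fun i => by
    rw [← hTA i]; exact Set.add_subset_add_left (Set.singleton_subset_iff.2 (hα i).1)
  have hsub2 : ∀ i, T i + {m i} ⊆ S := fun i => by
    rw [← hTA i]; exact Set.add_subset_add_left (Set.singleton_subset_iff.2 (hm i).1)
  -- the tiling points
  set c : ℕ → ℝ := fun n => ∑ j : Fin k, if (j : ℕ) < n then m j else α j with hc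
  have hc0 : c 0 = ∑ j, α j := by simp [hc]
  have hck : c k = ∑ j, m j := by simp [hc, Fin.is_lt]
  have hstep : ∀ i : Fin k, c (i + 1) = c i + (m i - α i) := by
    intro i
    have key : ∀ j : Fin k, (if (j : ℕ) < (i : ℕ) + 1 then m j else α j)
        = (if (j : ℕ) < (i : ℕ) then m j else α j) + (if j = i then m i - α i else 0) := by
      intro j
      by_cases h2 : j = i
      · subst h2
        rw [if_pos (Nat.lt_succ_self _), if_neg (lt_irrefl _), if_pos rfl]
        ring
      · have hne' : (j : ℕ) ≠ (i : ℕ) := fun h => h2 (Fin.ext h)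
        by_cases h1 : (j : ℕ) < (i : ℕ)
        · rw [if_pos h1, if_pos (by omega), if_neg h2, add_zero]
        · rw [if_neg h1, if_neg (by omega), if_neg h2, add_zero]
    simp only [hc]
    rw [Finset.sum_congr rfl (fun j _ => key j), Finset.sum_add_distrib]
    congr 1
    rw [Finset.sum_ite_eq' univ i (fun _ => m i - α i)]
    simp
  -- S is inside [c 0, c k]
  have hSIcc : S ⊆ Set.Icc (c 0) (c k) := by
    rw [hc0, hck]
    exact sum_subset_Icc A α m (fun i x hx => ⟨(hα i).2 hx, (hm i).2 hx⟩) univ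
  -- covering S by the tiles
  have hcover : volume S ≤ ∑ i : Fin k, volume (S ∩ Set.Ioo (c i) (c (i + 1))) := by
    have hsubU : S ⊆ ⋃ i : Fin k, S ∩ Set.Icc (c i) (c (i + 1)) := by
      intro x hx
      have hx' := hSIcc hx
      have hk1 : k - 1 + 1 = k := by omega
      obtain ⟨i, hi, hmem⟩ := icc_split c (k - 1) x (by rw [hk1]; exact hx')
      have hik : i < k := by omega
      exact Set.mem_iUnion.2 ⟨⟨i, hik⟩, hx, hmem⟩
    calc volume S ≤ volume (⋃ i : Fin k, S ∩ Set.Icc (c i) (c (i + 1))) :=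
          measure_mono hsubU
      _ ≤ ∑ i : Fin k, volume (S ∩ Set.Icc (c i) (c (i + 1))) :=
          measure_iUnion_fintype_le _ _
      _ ≤ ∑ i : Fin k, volume (S ∩ Set.Ioo (c i) (c (i + 1))) := by
          apply Finset.sum_le_sum
          intro i _
          have hsplit : S ∩ Set.Icc (c i) (c (i + 1)) ⊆
              (S ∩ Set.Ioo (c i) (c (i + 1))) ∪ ({c (i : ℕ)} ∪ {c ((i : ℕ) + 1)}) := by
            rintro x ⟨hxS, hx1, hx2⟩
            rcases eq_or_lt_of_le hx1 with h | h
            · exact Or.inr (Or.inl h.symm)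
            · rcases eq_or_lt_of_le hx2 with h' | h'
              · exact Or.inr (Or.inr h')
              · exact Or.inl ⟨hxS, h, h'⟩
          calc volume (S ∩ Set.Icc (c i) (c (i + 1)))
              ≤ volume ((S ∩ Set.Ioo (c i) (c (i + 1))) ∪ ({c (i : ℕ)} ∪ {c ((i : ℕ) + 1)})) :=
                measure_mono hsplit
            _ ≤ volume (S ∩ Set.Ioo (c i) (c (i + 1))) + volume ({c (i : ℕ)} ∪ {c ((i : ℕ) + 1)}) :=
                measure_union_le _ _
            _ ≤ volume (S ∩ Set.Ioo (c i) (c (i + 1))) + (volume {c (i : ℕ)} + volume {c ((i : ℕ) + 1)}) := by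
                gcongr; exact measure_union_le _ _
            _ = volume (S ∩ Set.Ioo (c i) (c (i + 1))) := by simp
  -- the per-index inequality
  have hkey : ∀ i : Fin k, volume (T i) + volume (S ∩ Set.Ioo (c i) (c (i + 1))) ≤ volume S := by
    intro i
    have e1 : c i - α i + α i = c (i : ℕ) := by ring
    have e2 : c i - α i + m i = c ((i : ℕ) + 1) := by rw [hstep i]; ring
    have h := core_step (hTcpt i) hScpt (hab i) (hsub1 i) (hsub2 i) (τ := c i - α i)
    rwa [e1, e2] at h
  -- summing up
  have hsum : (∑ i, volume (T i)) + volume S ≤ (k : ℝ≥0∞) * volume S := by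
    calc (∑ i, volume (T i)) + volume S
        ≤ (∑ i, volume (T i)) + ∑ i : Fin k, volume (S ∩ Set.Ioo (c i) (c (i + 1))) := by
          gcongr
      _ = ∑ i : Fin k, (volume (T i) + volume (S ∩ Set.Ioo (c i) (c (i + 1)))) := by
          rw [Finset.sum_add_distrib]
      _ ≤ ∑ _i : Fin k, volume S := Finset.sum_le_sum fun i _ => hkey i
      _ = (k : ℝ≥0∞) * volume S := by simp [mul_comm]
  -- ENNReal arithmetic
  have hVfin : volume S ≠ ⊤ := hScpt.measure_ne_top
  have hk1 : ((k : ℝ≥0∞) - 1) + 1 = (k : ℝ≥0∞) := by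
    have h1 : (1 : ℝ≥0∞) ≤ (k : ℝ≥0∞) := by exact_mod_cast Nat.one_le_cast.2 (by omega)
    exact tsub_add_cancel_of_le h1
  have h3 : (∑ i, volume (T i)) ≤ ((k : ℝ≥0∞) - 1) * volume S := by
    rw [← ENNReal.add_le_add_iff_right hVfin]
    calc (∑ i, volume (T i)) + volume S ≤ (k : ℝ≥0∞) * volume S := hsum
      _ = (((k : ℝ≥0∞) - 1) + 1) * volume S := by rw [hk1]
      _ = ((k : ℝ≥0∞) - 1) * volume S + volume S := by rw [add_mul, one_mul]
  have hne0 : ((k : ℝ≥0∞) - 1) ≠ 0 := by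
    simp only [ne_eq, tsub_eq_zero_iff_le, not_le]
    exact_mod_cast Nat.one_lt_cast.2 (by omega)
  have hnetop : ((k : ℝ≥0∞) - 1) ≠ ⊤ := ENNReal.sub_ne_top (by simp)
  calc ((k : ℝ≥0∞) - 1)⁻¹ * ∑ i, volume (T i)
      ≤ ((k : ℝ≥0∞) - 1)⁻¹ * (((k : ℝ≥0∞) - 1) * volume S) := by gcongr
    _ = volume S := by rw [← mul_assoc, ENNReal.inv_mul_cancel hne0 hnetop, one_mul]
end

section
/- Let n ≥ 1 and k ≥ 2 be integers and let A_1, …, A_k be nonempty compact sets in ℝⁿ. Then Vol_n(∑_{i=1}^k A_i) ≥ (1/(k−1)) · ∑_{i=1}^k Vol_n(∑_{j ∈ [k]∖{i}} A_j), where the sums of sets are Minkowski sums. -/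
/-!
Fix a nonzero linear functional `f` and, for each `i`, cut the leave-one-out sum
`Sᵢ = ∑_{j ≠ i} Aⱼ` by the hyperplane `f = uᵢ` into an upper and a lower part. Translating the
upper part of `Sᵢ` by a maximiser of `f` on `Aᵢ`, and the lower part of `Sᵢ₊₁` by a minimiser
of `f` on `Aᵢ₊₁`, puts both inside `∑ⱼ Aⱼ` on opposite sides of one hyperplane, because the
thresholds satisfy `uᵢ₊₁ + min_{Aᵢ₊₁} f = uᵢ + max_{Aᵢ} f`. So each of the `k - 1` consecutive
pairs packs into `∑ⱼ Aⱼ`, while the lower part of `S₁` is empty and the upper part of `Sₖ`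
lies in a hyperplane, hence is null.
-/

open MeasureTheory Finset
open scoped Pointwise ENNReal

section MinkowskiSum

variable {ι E : Type*} [AddCommMonoid E]

theorem Set.le_map_of_mem_finsetSum {β : Type*} [AddCommMonoid β] [PartialOrder β]
    [IsOrderedAddMonoid β] (f : E →+ β) {s : Finset ι} {A : ι → Set E} {c : ι → β}
    (hc : ∀ i ∈ s, ∀ y ∈ A i, c i ≤ f y) {x : E} (hx : x ∈ ∑ i ∈ s, A i) :
    ∑ i ∈ s, c i ≤ f x := by
  obtain ⟨y, hy, rfl⟩ := (Set.mem_finsetSum s A x).mp hx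
  rw [map_sum]
  exact sum_le_sum fun i hi ↦ hc i hi (y i) (hy hi)

theorem Set.map_le_of_mem_finsetSum {β : Type*} [AddCommMonoid β] [PartialOrder β]
    [IsOrderedAddMonoid β] (f : E →+ β) {s : Finset ι} {A : ι → Set E} {C : ι → β}
    (hC : ∀ i ∈ s, ∀ y ∈ A i, f y ≤ C i) {x : E} (hx : x ∈ ∑ i ∈ s, A i) :
    f x ≤ ∑ i ∈ s, C i := by
  obtain ⟨y, hy, rfl⟩ := (Set.mem_finsetSum s A x).mp hx
  rw [map_sum]
  exact sum_le_sum fun i hi ↦ hC i hi (y i) (hy hi)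

theorem Set.vadd_sum_erase_subset [DecidableEq ι] {s : Finset ι} {A : ι → Set E} {i : ι}
    (hi : i ∈ s) {a : E} (ha : a ∈ A i) : a +ᵥ ∑ j ∈ s.erase i, A j ⊆ ∑ j ∈ s, A j := by
  rw [← add_sum_erase s A hi, Set.vadd_set_subset_iff]
  exact fun x hx ↦ Set.add_mem_add ha hx

end MinkowskiSum

section Threshold

variable {K : ℕ} {α : Type*} [AddCommMonoid α]

/-- With `m j` and `M j` the minimum and maximum of `f` on `Aⱼ`, this is the value of `f` at the
point of `∑_{j ≠ i} Aⱼ` that maximises `f` over the summands `j < i` and minimises it over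
`j > i`. -/
def leaveOneOutThreshold (m M : Fin (K + 1) → α) (i : Fin (K + 1)) : α :=
  ∑ j ∈ univ.erase i, if j < i then M j else m j

theorem leaveOneOutThreshold_succ_add (m M : Fin (K + 1) → α) (i : Fin K) :
    leaveOneOutThreshold m M i.succ + m i.succ =
      leaveOneOutThreshold m M i.castSucc + M i.castSucc := by
  let F : Fin (K + 1) → α := fun j ↦ if j ≤ i.castSucc then M j else m j
  have h_succ : leaveOneOutThreshold m M i.succ + m i.succ = ∑ j, F j := by
    rw [add_comm, ← add_sum_erase univ F (mem_univ i.succ)]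
    congr 1
    · simp [F]
    · exact sum_congr rfl fun j _ ↦ by simp only [F, Fin.le_castSucc_iff]
  have h_castSucc : leaveOneOutThreshold m M i.castSucc + M i.castSucc = ∑ j, F j := by
    rw [add_comm, ← add_sum_erase univ F (mem_univ i.castSucc)]
    congr 1
    · simp [F]
    · refine sum_congr rfl fun j hj ↦ ?_
      simp only [F, le_iff_lt_or_eq, ne_of_mem_erase hj, or_false]
  rw [h_succ, h_castSucc]

end Threshold

namespace MeasureTheory

theorem Measure.addHaar_preimage_singleton_eq_zero {E : Type*} [NormedAddCommGroup E]
    [NormedSpace ℝ E] [MeasurableSpace E] [BorelSpace E] [FiniteDimensional ℝ E]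
    (μ : Measure E) [μ.IsAddHaarMeasure] {f : E →L[ℝ] ℝ} {v : E} (hv : f v ≠ 0) (c : ℝ) :
    μ (f ⁻¹' {c}) = 0 := by
  have hker : LinearMap.ker (f : E →ₗ[ℝ] ℝ) ≠ ⊤ := fun h ↦
    hv (by simpa using LinearMap.congr_fun (LinearMap.ker_eq_top.mp h) v)
  have hfiber : f ⁻¹' {c} = (· + -((c / f v) • v)) ⁻¹' LinearMap.ker (f : E →ₗ[ℝ] ℝ) := by
    ext x
    simp [← sub_eq_add_neg, sub_eq_zero, div_mul_cancel₀ c hv]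
  rw [hfiber, measure_preimage_add_right]
  exact Measure.addHaar_submodule μ _ hker

theorem measure_add_measure_le_of_vadd_subset {E : Type*} [MeasurableSpace E] [AddGroup E]
    (μ : Measure E) [μ.IsAddLeftInvariant] {S H T₁ T₂ : Set E} {a b : E}
    (hH : MeasurableSet H) (h₁ : a +ᵥ T₁ ⊆ S ∩ H) (h₂ : b +ᵥ T₂ ⊆ S \ H) :
    μ T₁ + μ T₂ ≤ μ S := by
  rw [← measure_vadd μ a T₁, ← measure_vadd μ b T₂, ← measure_inter_add_sdiff S hH]
  exact add_le_add (measure_mono h₁) (measure_mono h₂)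

theorem measure_sum_erase_inter_add_measure_sum_erase_diff_le {ι E : Type*} [DecidableEq ι]
    [AddCommGroup E] [MeasurableSpace E] (μ : Measure E) [μ.IsAddLeftInvariant] (f : E →+ ℝ)
    (hf : Measurable f) {s : Finset ι} {A : ι → Set E} {i j : ι} (hi : i ∈ s) (hj : j ∈ s)
    {a b : E} (ha : a ∈ A i) (hb : b ∈ A j) {u v : ℝ} (huv : v + f b = u + f a) :
    μ ((∑ l ∈ s.erase i, A l) ∩ {x | u ≤ f x}) + μ ((∑ l ∈ s.erase j, A l) \ {x | v ≤ f x})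
      ≤ μ (∑ l ∈ s, A l) := by
  refine measure_add_measure_le_of_vadd_subset μ (a := a) (b := b)
    (measurableSet_le measurable_const hf (f := fun _ ↦ u + f a))
    (Set.vadd_set_subset_iff.mpr fun x ⟨hxS, hxH⟩ ↦ ⟨?_, ?_⟩)
    (Set.vadd_set_subset_iff.mpr fun x ⟨hxS, hxH⟩ ↦ ⟨?_, ?_⟩)
  · exact Set.vadd_sum_erase_subset hi ha (Set.vadd_mem_vadd_set hxS)
  · simp only [Set.mem_ofPred_eq, vadd_eq_add, map_add]
    linarith [show u ≤ f x from hxH]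
  · exact Set.vadd_sum_erase_subset hj hb (Set.vadd_mem_vadd_set hxS)
  · simp only [Set.mem_ofPred_eq, vadd_eq_add, map_add, not_le]
    linarith [show f x < v from not_le.mp hxH]

theorem sum_measure_sum_erase_le_of_null_fibers {E : Type*} [AddCommGroup E]
    [TopologicalSpace E] [MeasurableSpace E] [OpensMeasurableSpace E]
    (μ : Measure E) [μ.IsAddLeftInvariant] (f : E →+ ℝ) (hf : Continuous f)
    (hfiber : ∀ c, μ (f ⁻¹' {c}) = 0) {K : ℕ} (A : Fin (K + 1) → Set E)
    (hne : ∀ i, (A i).Nonempty) (hcpt : ∀ i, IsCompact (A i)) :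
    ∑ i, μ (∑ j ∈ univ.erase i, A j) ≤ K * μ (∑ i, A i) := by
  choose p hpA hpmin using fun j ↦ (hcpt j).exists_isMinOn (hne j) hf.continuousOn
  choose q hqA hqmax using fun j ↦ (hcpt j).exists_isMaxOn (hne j) hf.continuousOn
  set S : Fin (K + 1) → Set E := fun i ↦ ∑ j ∈ univ.erase i, A j
  set u := leaveOneOutThreshold (fun j ↦ f (p j)) (fun j ↦ f (q j))
  set H : Fin (K + 1) → Set E := fun i ↦ {x | u i ≤ f x}
  have h_first : μ (S 0 \ H 0) = 0 := by
    refine measure_mono_null (fun x ⟨hxS, hxH⟩ ↦ hxH ?_) measure_empty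
    refine Set.le_map_of_mem_finsetSum f (fun j _ y hy ↦ ?_) hxS
    simpa [Fin.not_lt_zero] using hpmin j hy
  have h_last : μ (S (Fin.last K) ∩ H (Fin.last K)) = 0 := by
    refine measure_mono_null (fun x ⟨hxS, hxH⟩ ↦ ?_) (hfiber (u (Fin.last K)))
    refine le_antisymm (Set.map_le_of_mem_finsetSum f (fun j hj y hy ↦ ?_) hxS) hxH
    simpa [Fin.lt_last_iff_ne_last.mpr (ne_of_mem_erase hj)] using hqmax j hy
  have h_pack (i : Fin K) :
      μ (S i.castSucc ∩ H i.castSucc) + μ (S i.succ \ H i.succ) ≤ μ (∑ i, A i) :=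
    measure_sum_erase_inter_add_measure_sum_erase_diff_le μ f hf.measurable (mem_univ _)
      (mem_univ _) (hqA _) (hpA _) (leaveOneOutThreshold_succ_add _ _ i)
  calc ∑ i, μ (S i) = ∑ i, (μ (S i ∩ H i) + μ (S i \ H i)) :=
        sum_congr rfl fun i _ ↦
          (measure_inter_add_sdiff _ (measurableSet_le measurable_const hf.measurable)).symm
    _ = ∑ i : Fin K, (μ (S i.castSucc ∩ H i.castSucc) + μ (S i.succ \ H i.succ)) := by
        rw [sum_add_distrib, Fin.sum_univ_castSucc, Fin.sum_univ_succ (fun i ↦ μ (S i \ H i)),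
          h_first, h_last, sum_add_distrib]
        ring
    _ ≤ ∑ _i : Fin K, μ (∑ i, A i) := sum_le_sum fun i _ ↦ h_pack i
    _ = K * μ (∑ i, A i) := by simp

theorem sum_addHaar_sum_erase_le {E : Type*} [NormedAddCommGroup E] [NormedSpace ℝ E]
    [MeasurableSpace E] [BorelSpace E] [FiniteDimensional ℝ E] [Nontrivial E]
    (μ : Measure E) [μ.IsAddHaarMeasure] {K : ℕ} (A : Fin (K + 1) → Set E)
    (hne : ∀ i, (A i).Nonempty) (hcpt : ∀ i, IsCompact (A i)) :
    ∑ i, μ (∑ j ∈ univ.erase i, A j) ≤ K * μ (∑ i, A i) := by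
  obtain ⟨v, hv⟩ := exists_ne (0 : E)
  obtain ⟨f, hf⟩ := SeparatingDual.exists_ne_zero (R := ℝ) hv
  exact sum_measure_sum_erase_le_of_null_fibers μ f f.continuous
    (Measure.addHaar_preimage_singleton_eq_zero μ hf) A hne hcpt

end MeasureTheory

theorem volume_minkowski_sum_ge_leave_one_out_general
    (n : ℕ) (hn : 1 ≤ n) (k : ℕ)
    (A : Fin k → Set (EuclideanSpace ℝ (Fin n)))
    (hne : ∀ i, (A i).Nonempty) (hcpt : ∀ i, IsCompact (A i)) :
    ((k : ℝ≥0∞) - 1)⁻¹ * ∑ i, volume (∑ j ∈ univ.erase i, A j) ≤ volume (∑ i, A i) := by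
  obtain _ | K := k
  · simp
  have : Nonempty (Fin n) := ⟨⟨0, hn⟩⟩
  rw [Nat.cast_succ, ENNReal.add_sub_cancel_right ENNReal.one_ne_top, mul_comm, ← div_eq_mul_inv]
  exact ENNReal.div_le_of_le_mul' (sum_addHaar_sum_erase_le volume A hne hcpt)

/-- **Conjectured fractional superadditivity without the exponents removed is true**
(Theorem 4.1 of Fradelizi–Madiman–Marsiglietti–Zvavitch): if `n ≥ 1`, `k ≥ 2` and
`A 1, …, A k` are nonempty compact subsets of `ℝⁿ`, then the Lebesgue measure of the
Minkowski sum `∑ i, A i` is at least `(k-1)⁻¹` times the sum of the measures of the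
leave-one-out Minkowski sums `∑_{j ≠ i} A j`. -/
theorem volume_minkowski_sum_ge_leave_one_out
    (n : ℕ) (hn : 1 ≤ n) (k : ℕ) (hk : 2 ≤ k)
    (A : Fin k → Set (EuclideanSpace ℝ (Fin n)))
    (hne : ∀ i, (A i).Nonempty) (hcpt : ∀ i, IsCompact (A i)) :
    ((k : ℝ≥0∞) - 1)⁻¹ * ∑ i, volume (∑ j ∈ univ.erase i, A j) ≤ volume (∑ i, A i) :=
  volume_minkowski_sum_ge_leave_one_out_general n hn k A hne hcpt
end

section
/- Let A be a nonempty compact set in ℝⁿ and let k ≥ 2 be an integer. Then Vol_n(A(k)) ≥ ((k−1)/k)^{n−1} · Vol_n(A(k−1)). -/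
/-!
Write `Sₘ` for the `m`-fold Minkowski sum of `A`, so `Vol(A(m)) = Vol(Sₘ) / mⁿ` and the claim
reduces to `(m + 1) Vol(Sₘ) ≤ m Vol(Sₘ₊₁)`. Let a nonzero linear functional `f` attain its minimum
and maximum on `A` at `a₀` and `a₁`, and put `v = a₁ - a₀`. Then `Sₘ₊₁` contains
`a₀ + (Sₘ ∪ (v + Sₘ))`, while `Sₘ` meets `m v + Sₘ` only in the hyperplane `f = m f(a₁)`.
Since `s \ (m v + s)` is covered by the `m` translates `j v + (s \ (v + s))`, `j < m`, this gives
`Vol(Sₘ) ≤ m Vol(Sₘ \ (v + Sₘ))`, hence `Vol(Sₘ ∪ (v + Sₘ)) ≥ (1 + 1/m) Vol(Sₘ)`.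
-/

open MeasureTheory Finset
open scoped Pointwise ENNReal

/-- The Minkowski average `A(k) = (A + ⋯ + A)/k` (`k` Minkowski summands) of a set
`A ⊆ ℝⁿ`: the set of all averages `(a 1 + ⋯ + a k)/k` with each `a i ∈ A`. -/
def minkAvg {n : ℕ} (A : Set (EuclideanSpace ℝ (Fin n))) (k : ℕ) :
    Set (EuclideanSpace ℝ (Fin n)) :=
  {x | ∃ a : Fin k → EuclideanSpace ℝ (Fin n), (∀ i, a i ∈ A) ∧ x = (k : ℝ)⁻¹ • ∑ i, a i}

section Translates

variable {G α : Type*} [AddGroup G] [AddAction G α] [MeasurableSpace α] {μ : Measure α}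
  [VAddInvariantMeasure G α μ]

theorem measure_sdiff_vadd_add_le (s : Set α) (u w : G) :
    μ (s \ ((u + w) +ᵥ s)) ≤ μ (s \ (u +ᵥ s)) + μ (s \ (w +ᵥ s)) := by
  have hsub : s \ ((u + w) +ᵥ s) ⊆ (s \ (u +ᵥ s)) ∪ (u +ᵥ (s \ (w +ᵥ s))) := by
    rintro x ⟨hxs, hx⟩
    by_cases hu : x ∈ u +ᵥ s
    · obtain ⟨y, hys, rfl⟩ := hu
      refine Or.inr (Set.vadd_mem_vadd_set ⟨hys, fun hy => hx ?_⟩)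
      rw [← vadd_vadd]
      exact Set.vadd_mem_vadd_set hy
    · exact Or.inl ⟨hxs, hu⟩
  grw [hsub, measure_union_le, measure_vadd]

theorem measure_sdiff_nsmul_vadd_le (s : Set α) (v : G) (m : ℕ) :
    μ (s \ ((m • v) +ᵥ s)) ≤ m * μ (s \ (v +ᵥ s)) := by
  induction m with
  | zero => simp
  | succ m ih =>
    grw [succ_nsmul, measure_sdiff_vadd_add_le, ih, Nat.cast_succ, add_one_mul]

theorem add_one_mul_measure_le_measure_union_vadd [MeasurableConstVAdd G α] {s : Set α}
    (hs : MeasurableSet s) {v : G} {m : ℕ} (h : μ (s ∩ ((m • v) +ᵥ s)) = 0) :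
    (m + 1) * μ s ≤ m * μ (s ∪ (v +ᵥ s)) := by
  have hdiff : μ s ≤ m * μ (s \ (v +ᵥ s)) := by
    grw [measure_le_inter_add_sdiff μ s ((m • v) +ᵥ s), h, zero_add,
      measure_sdiff_nsmul_vadd_le]
  calc (m + 1) * μ s = m * μ (v +ᵥ s) + μ s := by rw [measure_vadd]; ring
    _ ≤ m * μ (v +ᵥ s) + m * μ (s \ (v +ᵥ s)) := by grw [hdiff]
    _ = m * μ (s ∪ (v +ᵥ s)) := by
      rw [← mul_add, measure_add_sdiff (hs.const_vadd v).nullMeasurableSet, Set.union_comm]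

end Translates

theorem addHaar_preimage_singleton_eq_zero {E : Type*} [NormedAddCommGroup E] [NormedSpace ℝ E]
    [MeasurableSpace E] [BorelSpace E] [FiniteDimensional ℝ E] (μ : Measure E)
    [μ.IsAddHaarMeasure] {f : E →ₗ[ℝ] ℝ} (hf : f ≠ 0) (r : ℝ) : μ (f ⁻¹' {r}) = 0 := by
  have h := (ae_comp_linearMap_mem_iff f μ volume (f.surjective_of_ne_zero hf)
    (measurableSet_singleton r).compl).2 (by simp [ae_iff])
  simpa [ae_iff, Set.preimage] using h

def minkSum {E : Type*} [AddCommMonoid E] (A : Set E) (k : ℕ) : Set E :=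
  (fun a : Fin k → E => ∑ i, a i) '' Set.univ.pi fun _ => A

section MinkSum

variable {E : Type*} [AddCommMonoid E] {A : Set E}

theorem isCompact_minkSum [TopologicalSpace E] [ContinuousAdd E] (hA : IsCompact A) (k : ℕ) :
    IsCompact (minkSum A k) :=
  (isCompact_univ_pi fun _ => hA).image (continuous_finsetSum _ fun i _ => continuous_apply i)

theorem vadd_minkSum_subset {a : E} (ha : a ∈ A) (k : ℕ) :
    a +ᵥ minkSum A k ⊆ minkSum A (k + 1) := by
  rintro _ ⟨_, ⟨b, hb, rfl⟩, rfl⟩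
  exact ⟨Fin.cons a b, fun i _ => Fin.cases ha (fun j => hb j trivial) i, by
    simp [Fin.sum_cons, vadd_eq_add]⟩

theorem mapsTo_minkSum {F : Type*} [FunLike F E ℝ] [AddMonoidHomClass F E ℝ] (f : F)
    {α β : ℝ} (hA : Set.MapsTo f A (Set.Icc α β)) (k : ℕ) :
    Set.MapsTo f (minkSum A k) (Set.Icc (k * α) (k * β)) := by
  rintro _ ⟨a, ha, rfl⟩
  have hfa i : f (a i) ∈ Set.Icc α β := hA (ha i trivial)
  rw [map_sum]
  constructor
  · simpa using card_nsmul_le_sum univ _ α fun i _ => (hfa i).1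
  · simpa using sum_le_card_nsmul univ _ β fun i _ => (hfa i).2

end MinkSum

theorem add_one_mul_addHaar_minkSum_le {E : Type*} [NormedAddCommGroup E] [NormedSpace ℝ E]
    [MeasurableSpace E] [BorelSpace E] [FiniteDimensional ℝ E] [Nontrivial E] (μ : Measure E)
    [μ.IsAddHaarMeasure] {A : Set E} (hA : IsCompact A) (hne : A.Nonempty) (m : ℕ) :
    (m + 1) * μ (minkSum A m) ≤ m * μ (minkSum A (m + 1)) := by
  obtain ⟨x, hx⟩ := exists_ne (0 : E)
  obtain ⟨f, hf⟩ := SeparatingDual.exists_ne_zero (R := ℝ) hx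
  obtain ⟨a₀, ha₀, hmin⟩ := hA.exists_isMinOn hne f.continuous.continuousOn
  obtain ⟨a₁, ha₁, hmax⟩ := hA.exists_isMaxOn hne f.continuous.continuousOn
  set B := minkSum A m
  have hB : Set.MapsTo f B (Set.Icc (m * f a₀) (m * f a₁)) :=
    mapsTo_minkSum f (fun a ha => ⟨hmin ha, hmax ha⟩) m
  have hnull : μ (B ∩ ((m • (a₁ - a₀)) +ᵥ B)) = 0 := by
    refine measure_mono_null ?_ (addHaar_preimage_singleton_eq_zero μ (f := f.toLinearMap)
      (DFunLike.ne_iff.2 ⟨x, hf⟩) (m * f a₁))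
    rintro _ ⟨hxB, b, hb, rfl⟩
    have hle := (hB hxB).2
    have hge := (hB hb).1
    simp only [Set.mem_preimage, Set.mem_singleton_iff, ContinuousLinearMap.coe_coe, vadd_eq_add,
      map_add, map_nsmul, map_sub, nsmul_eq_mul] at hle ⊢
    linarith
  calc (m + 1) * μ B ≤ m * μ (B ∪ ((a₁ - a₀) +ᵥ B)) :=
        add_one_mul_measure_le_measure_union_vadd (isCompact_minkSum hA m).measurableSet hnull
    _ = m * μ ((a₀ +ᵥ B) ∪ (a₁ +ᵥ B)) := by
      rw [← measure_vadd μ a₀, Set.vadd_set_union, vadd_vadd, add_sub_cancel]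
    _ ≤ m * μ (minkSum A (m + 1)) := by
      gcongr
      exact Set.union_subset (vadd_minkSum_subset ha₀ m) (vadd_minkSum_subset ha₁ m)

section MinkAvg

variable {n : ℕ} {A : Set (EuclideanSpace ℝ (Fin n))}

theorem minkAvg_eq_smul_minkSum (A : Set (EuclideanSpace ℝ (Fin n))) (k : ℕ) :
    minkAvg A k = (k : ℝ)⁻¹ • minkSum A k := by
  ext x
  simp [minkAvg, minkSum, Set.mem_smul_set, eq_comm]

theorem volume_minkAvg (A : Set (EuclideanSpace ℝ (Fin n))) {k : ℕ} (hk : k ≠ 0) :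
    volume (minkAvg A k) = (k : ℝ≥0∞)⁻¹ ^ n * volume (minkSum A k) := by
  rw [minkAvg_eq_smul_minkSum, Measure.addHaar_smul_of_nonneg _ (by positivity),
    finrank_euclideanSpace_fin, ENNReal.ofReal_pow (by positivity),
    ENNReal.ofReal_inv_of_pos (by positivity), ENNReal.ofReal_natCast]

theorem minkAvg_nonempty (hA : A.Nonempty) (k : ℕ) : (minkAvg A k).Nonempty := by
  obtain ⟨a, ha⟩ := hA
  exact ⟨_, fun _ => a, fun _ => ha, rfl⟩

end MinkAvg

/-- **Refined superadditivity for Minkowski self-averages** (Corollary 4.2 of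
Fradelizi–Madiman–Marsiglietti–Zvavitch): for a nonempty compact `A ⊆ ℝⁿ` and `k ≥ 2`,
`Vol_n(A(k)) ≥ ((k-1)/k)^(n-1) · Vol_n(A(k-1))`. -/
theorem volume_minkAvg_ge {n : ℕ} (A : Set (EuclideanSpace ℝ (Fin n)))
    (hne : A.Nonempty) (hcpt : IsCompact A) (k : ℕ) (hk : 2 ≤ k) :
    (((k : ℝ≥0∞) - 1) / k) ^ (n - 1) * volume (minkAvg A (k - 1)) ≤ volume (minkAvg A k) := by
  obtain _ | ⟨N⟩ := n
  · have huniv l : minkAvg A l = Set.univ := (minkAvg_nonempty hne l).eq_univ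
    simp [huniv]
  obtain ⟨m, rfl⟩ : ∃ m, k = m + 1 := ⟨k - 1, by omega⟩
  have hkey := add_one_mul_addHaar_minkSum_le volume hcpt hne m
  rw [add_tsub_cancel_right, volume_minkAvg A (by omega), volume_minkAvg A (by omega)]
  push_cast
  rw [ENNReal.add_sub_cancel_right ENNReal.one_ne_top]
  set x : ℝ≥0∞ := (m : ℝ≥0∞)
  set y : ℝ≥0∞ := (m : ℝ≥0∞) + 1
  have hx : x ≠ 0 := by simp [x]; omega
  have hstep : x⁻¹ * volume (minkSum A m) ≤ y⁻¹ * volume (minkSum A (m + 1)) := by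
    rw [ENNReal.inv_mul_le_iff hx (by simp [x]), mul_left_comm, ← ENNReal.div_eq_inv_mul,
      ENNReal.le_div_iff_mul_le (by simp [y]) (by simp [y]), mul_comm]
    exact hkey
  calc (x / y) ^ N * (x⁻¹ ^ (N + 1) * volume (minkSum A m))
      = (x * x⁻¹) ^ N * y⁻¹ ^ N * (x⁻¹ * volume (minkSum A m)) := by
        rw [div_eq_mul_inv, mul_pow, mul_pow, pow_succ]; ring
    _ ≤ y⁻¹ ^ N * (y⁻¹ * volume (minkSum A (m + 1))) := by
        rw [ENNReal.mul_inv_cancel hx (by simp [x]), one_pow, one_mul]; gcongr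
    _ = y⁻¹ ^ (N + 1) * volume (minkSum A (m + 1)) := by ring
end

section
/- Let B_1, B_2, B_3 be nonempty compact convex subsets of ℝⁿ. Then Vol_n(B_1 + B_2 + B_3) + Vol_n(B_1) ≥ Vol_n(B_1 + B_2) + Vol_n(B_1 + B_3), where the sums of sets are Minkowski sums. -/
/-!
Approximating `B₂` from inside by an increasing sequence of polytopes reduces the claim to a
polytope `P = conv {v j}`: the union of the sets `B₁ + P` is convex, so it has the measure of its
closure, which contains `B₁ + B₂`. After translating `T` so that `0 ∈ T`, it suffices to show
`Vol((K + T) \ K) ≤ Vol((K + P + T) \ (K + P))`. Split `(K + T) \ K` according to the vertex `v j`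
at which `⟪z - p z, ·⟫` is maximal on `P`, where `p` is the metric projection onto `K`, and
translate the `j`-th piece by `v j`. The translated pieces avoid `K + P` because `z - p z` is an
outer normal of `K` at `p z`, and they are disjoint because `v j + z = v j' + z'` forces
`z - p z = z' - p z'`, which lies in only one piece of the partition.
-/

open MeasureTheory Set TopologicalSpace Function
open scoped Pointwise RealInnerProductSpace

section MetricProjection

variable {E : Type*} [NormedAddCommGroup E] [InnerProductSpace ℝ E]

/-- The variational inequality characterizing `p z` as the point of the convex set `K` nearest
to `z`. -/
def IsMetricProjection (K : Set E) (p : E → E) : Prop :=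
  ∀ z, p z ∈ K ∧ ∀ k ∈ K, ⟪z - p z, k - p z⟫ ≤ 0

theorem exists_isMetricProjection {K : Set E} (hne : K.Nonempty) (hc : IsComplete K)
    (hK : Convex ℝ K) : ∃ p, IsMetricProjection K p := by
  have h (z : E) : ∃ w ∈ K, ∀ k ∈ K, ⟪z - w, k - w⟫ ≤ 0 := by
    obtain ⟨w, hw, hmin⟩ := exists_norm_eq_iInf_of_complete_convex hne hc hK z
    exact ⟨w, hw, (norm_eq_iInf_iff_real_inner_le_zero hK hw).1 hmin⟩
  choose p hp using h
  exact ⟨p, hp⟩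

namespace IsMetricProjection

variable {K : Set E} {p : E → E}

theorem inner_le_of_mem (hp : IsMetricProjection K p) (z : E) {k : E} (hk : k ∈ K) :
    ⟪z - p z, k⟫ ≤ ⟪z - p z, p z⟫ := by
  have h := (hp z).2 k hk
  rw [inner_sub_right] at h
  linarith

theorem lipschitzWith_one (hp : IsMetricProjection K p) : LipschitzWith 1 p := by
  refine LipschitzWith.of_dist_le_mul fun x y => ?_
  rw [dist_eq_norm, dist_eq_norm, NNReal.coe_one, one_mul]
  have hfirm : ‖p x - p y‖ ^ 2 ≤ ⟪x - y, p x - p y⟫ := by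
    have hx := hp.inner_le_of_mem x (hp y).1
    have hy := hp.inner_le_of_mem y (hp x).1
    rw [← real_inner_self_eq_norm_sq]
    simp only [inner_sub_left, inner_sub_right] at hx hy ⊢
    linarith [real_inner_comm (p x) (p y)]
  nlinarith [real_inner_le_norm (x - y) (p x - p y), norm_nonneg (p x - p y),
    norm_nonneg (x - y)]

theorem add_notMem_add (hp : IsMetricProjection K p) {P : Set E} {z v : E} (hz : z ∉ K)
    (hv : ∀ q ∈ P, ⟪z - p z, q⟫ ≤ ⟪z - p z, v⟫) : v + z ∉ K + P := by
  rintro ⟨k, hk, q, hq, hkq⟩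
  have hself : ⟪z - p z, z - p z⟫ ≤ 0 := by
    have h := congrArg (⟪z - p z, ·⟫) hkq
    simp only [inner_add_right, inner_sub_right] at h ⊢
    linarith [hp.inner_le_of_mem z hk, hv q hq]
  exact hz (sub_eq_zero.1 (real_inner_self_nonpos.1 hself) ▸ (hp z).1)

theorem sub_eq_of_add_eq_add (hp : IsMetricProjection K p) {z z' v v' : E}
    (hv : ⟪z - p z, v'⟫ ≤ ⟪z - p z, v⟫) (hv' : ⟪z' - p z', v⟫ ≤ ⟪z' - p z', v'⟫)
    (h : v + z = v' + z') : z - p z = z' - p z' := by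
  have e : (z - p z) - (z' - p z') = (v' - v) + (p z' - p z) := by
    rw [show z = v' + z' - v by rw [← h]; abel]
    abel
  refine sub_eq_zero.1 (real_inner_self_nonpos.1 ?_)
  rw [inner_sub_left, e]
  simp only [inner_add_right, inner_sub_right]
  linarith [hp.inner_le_of_mem z (hp z').1, hp.inner_le_of_mem z' (hp z).1]

end IsMetricProjection

end MetricProjection

theorem exists_measurable_partition_forall_le {α ι β : Type*} [MeasurableSpace α]
    [LinearOrder ι] [LocallyFiniteOrderBot ι] [Finite ι] [Nonempty ι] [LinearOrder β]
    {f : ι → α → β} (hf : ∀ i j, MeasurableSet {a | f i a ≤ f j a}) :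
    ∃ C : ι → Set α, (∀ j, MeasurableSet (C j)) ∧ Pairwise (Disjoint on C) ∧
      ⋃ j, C j = univ ∧ ∀ j, ∀ a ∈ C j, ∀ i, f i a ≤ f j a := by
  set N : ι → Set α := fun j => ⋂ i, {a | f i a ≤ f j a}
  have hN (j : ι) : MeasurableSet (N j) := .iInter fun i => hf i j
  refine ⟨disjointed N, fun j => disjointedRec (fun _ _ ht => ht.diff (hN _)) (hN j),
    disjoint_disjointed N, ?_, fun j a ha => by
      simpa only [N, mem_iInter, mem_ofPred_eq] using disjointed_subset N j ha⟩
  rw [iUnion_disjointed, eq_univ_iff_forall]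
  intro a
  obtain ⟨j, hj⟩ := Finite.exists_max (f · a)
  exact mem_iUnion.2 ⟨j, mem_iInter.2 hj⟩

theorem measure_le_of_pairwise_disjoint_vadd {G ι : Type*} [MeasurableSpace G] [AddGroup G]
    [MeasurableAdd G] (μ : Measure G) [μ.IsAddLeftInvariant] [Countable ι] {s t : Set G}
    {A : ι → Set G} (v : ι → G) (hA : ∀ i, MeasurableSet (A i)) (hs : s ⊆ ⋃ i, A i)
    (hdisj : Pairwise (Disjoint on fun i => v i +ᵥ A i)) (ht : ∀ i, v i +ᵥ A i ⊆ t) :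
    μ s ≤ μ t :=
  calc μ s ≤ ∑' i, μ (A i) := (measure_mono hs).trans (measure_iUnion_le A)
    _ = μ (⋃ i, v i +ᵥ A i) := by
      rw [measure_iUnion hdisj fun i => (hA i).const_vadd (v i)]
      simp only [measure_vadd]
    _ ≤ μ t := measure_mono (iUnion_subset ht)

section ConvexBodies

variable {E : Type*} [NormedAddCommGroup E] [InnerProductSpace ℝ E] [MeasurableSpace E]
  [BorelSpace E] (μ : Measure E) [μ.IsAddLeftInvariant]
  {ι : Type*} [LinearOrder ι] [LocallyFiniteOrderBot ι] [Finite ι] [Nonempty ι]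

theorem measure_add_sdiff_le_measure_add_convexHull_add_sdiff {K T : Set E} (hKne : K.Nonempty)
    (hKc : IsCompact K) (hKv : Convex ℝ K) (hTc : IsCompact T) (v : ι → E) :
    μ ((K + T) \ K) ≤
      μ ((K + convexHull ℝ (range v) + T) \ (K + convexHull ℝ (range v))) := by
  obtain ⟨p, hp⟩ := exists_isMetricProjection hKne hKc.isComplete hKv
  have hu : Continuous fun z => z - p z := continuous_id.sub hp.lipschitzWith_one.continuous
  obtain ⟨C, hCm, hCdisj, hCcov, hCmax⟩ := exists_measurable_partition_forall_le
    (f := fun i a => ⟪a, v i⟫) fun i j => measurableSet_le (by fun_prop) (by fun_prop)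
  set A : ι → Set E := fun j => (K + T) \ K ∩ (fun z => z - p z) ⁻¹' C j
  have hmax (j : ι) (z : E) (hz : z ∈ A j) (q : E) (hq : q ∈ convexHull ℝ (range v)) :
      ⟪z - p z, q⟫ ≤ ⟪z - p z, v j⟫ := by
    obtain ⟨_, ⟨i, rfl⟩, hqi⟩ :=
      ((innerₗ E (z - p z)).convexOn convex_univ).exists_ge_of_mem_convexHull (subset_univ _) hq
    exact hqi.trans (hCmax j _ hz.2 i)
  refine measure_le_of_pairwise_disjoint_vadd μ (A := A) v (fun j => ?measurable)
    (fun z hz => ?cover) ?disjoint ?mapsTo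
  case measurable =>
    exact ((hKc.add hTc).isClosed.measurableSet.diff hKc.isClosed.measurableSet).inter
      ((hCm j).preimage hu.measurable)
  case cover =>
    obtain ⟨j, hj⟩ := mem_iUnion.1 (hCcov ▸ mem_univ (z - p z))
    exact mem_iUnion.2 ⟨j, hz, hj⟩
  case disjoint =>
    intro j j' hjj'
    refine disjoint_left.2 ?_
    rintro _ ⟨z, hz, rfl⟩ ⟨z', hz', h⟩
    have heq := hp.sub_eq_of_add_eq_add (hmax j z hz _ (subset_convexHull ℝ _ ⟨j', rfl⟩))
      (hmax j' z' hz' _ (subset_convexHull ℝ _ ⟨j, rfl⟩)) h.symm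
    exact disjoint_left.1 (hCdisj hjj') (show z - p z ∈ C j from hz.2) (heq ▸ hz'.2)
  case mapsTo =>
    rintro j _ ⟨z, ⟨⟨⟨k, hk, t, ht, rfl⟩, hzK⟩, hzC⟩, rfl⟩
    refine ⟨⟨k + v j, add_mem_add hk (subset_convexHull ℝ _ ⟨j, rfl⟩), t, ht, ?_⟩,
      hp.add_notMem_add hzK (hmax j _ ⟨⟨⟨k, hk, t, ht, rfl⟩, hzK⟩, hzC⟩)⟩
    simp only [vadd_eq_add]
    abel

theorem measure_add_convexHull_add_le_of_zero_mem {K T : Set E} (hKne : K.Nonempty)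
    (hKc : IsCompact K) (hKv : Convex ℝ K) (hTc : IsCompact T) (hT0 : (0 : E) ∈ T)
    (v : ι → E) :
    μ (K + convexHull ℝ (range v)) + μ (K + T) ≤
      μ (K + convexHull ℝ (range v) + T) + μ K := by
  set X := K + convexHull ℝ (range v)
  have hXS : X ⊆ X + T := fun x hx => ⟨x, hx, 0, hT0, add_zero x⟩
  have hX : MeasurableSet X :=
    (hKc.add ((finite_range v).isCompact_convexHull (𝕜 := ℝ))).isClosed.measurableSet
  calc μ X + μ (K + T) ≤ μ X + (μ K + μ ((K + T) \ K)) := by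
        gcongr
        exact (measure_le_inter_add_sdiff μ _ K).trans (by gcongr; exact inter_subset_right)
    _ ≤ μ X + (μ K + μ ((X + T) \ X)) := by
        gcongr μ X + (μ K + ?_)
        exact measure_add_sdiff_le_measure_add_convexHull_add_sdiff μ hKne hKc hKv hTc v
    _ = μ (X + T) + μ K := by
        rw [← measure_sdiff_add_inter (X + T) hX, inter_eq_right.2 hXS]
        ring

theorem measure_add_convexHull_add_le {K T : Set E} (hKne : K.Nonempty)
    (hKc : IsCompact K) (hKv : Convex ℝ K) (hTne : T.Nonempty) (hTc : IsCompact T)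
    (v : ι → E) :
    μ (K + convexHull ℝ (range v)) + μ (K + T) ≤
      μ (K + convexHull ℝ (range v) + T) + μ K := by
  obtain ⟨t, ht⟩ := hTne
  have h := measure_add_convexHull_add_le_of_zero_mem μ hKne hKc hKv (hTc.vadd (-t))
    ⟨t, ht, neg_add_cancel t⟩ v
  rwa [add_vadd_comm, add_vadd_comm, measure_vadd, measure_vadd] at h

end ConvexBodies

theorem TopologicalSpace.IsSeparable.exists_seq_range_subset_subset_closure {X : Type*}
    [TopologicalSpace X] [PseudoMetrizableSpace X] {s : Set X} (hs : IsSeparable s)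
    (hne : s.Nonempty) : ∃ c : ℕ → X, range c ⊆ s ∧ s ⊆ closure (range c) := by
  obtain ⟨t, hts, htc, hst⟩ := hs.exists_countable_dense_subset
  obtain ⟨c, rfl⟩ := htc.exists_eq_range (closure_nonempty_iff.1 (hne.mono hst))
  exact ⟨c, hts, hst⟩

theorem measure_add_le_iSup_measure_add_convexHull {E : Type*} [NormedAddCommGroup E]
    [NormedSpace ℝ E] [MeasurableSpace E] [BorelSpace E] [FiniteDimensional ℝ E]
    (μ : Measure E) [μ.IsAddHaarMeasure] {K B : Set E} (hK : Convex ℝ K) {c : ℕ → E}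
    (hB : B ⊆ closure (range c)) :
    μ (K + B) ≤ ⨆ k, μ (K + convexHull ℝ (range fun i : Fin (k + 1) => c i)) := by
  set P : ℕ → Set E := fun k => convexHull ℝ (range fun i : Fin (k + 1) => c i)
  have hP : Monotone P := fun k l hkl =>
    convexHull_mono (range_subset_iff.2 fun i => ⟨Fin.castLE (by omega) i, rfl⟩)
  have hU : Convex ℝ (K + ⋃ k, P k) :=
    hK.add (hP.directed_le.convex_iUnion fun k => convex_convexHull ℝ _)
  have hc : range c ⊆ ⋃ k, P k := range_subset_iff.2 fun i =>
    mem_iUnion.2 ⟨i, subset_convexHull ℝ _ ⟨Fin.last i, rfl⟩⟩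
  have hcl : K + B ⊆ closure (K + ⋃ k, P k) :=
    calc K + B ⊆ K + closure (⋃ k, P k) := add_subset_add_left (hB.trans (closure_mono hc))
      _ ⊆ closure (K + ⋃ k, P k) := set_vadd_closure_subset K _
  calc μ (K + B) ≤ μ (closure (K + ⋃ k, P k)) := measure_mono hcl
    _ = μ (⋃ k, K + P k) := by
        rw [measure_closure_of_null_frontier (hU.addHaar_frontier μ), add_iUnion]
    _ = ⨆ k, μ (K + P k) := Monotone.measure_iUnion fun k l hkl => add_subset_add_left (hP hkl)

theorem volume_supermodular_three_convex_general {n : ℕ}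
    (B₁ B₂ B₃ : Set (EuclideanSpace ℝ (Fin n)))
    (h₁ : B₁.Nonempty) (h₂ : B₂.Nonempty) (h₃ : B₃.Nonempty)
    (hc₁ : IsCompact B₁) (hc₃ : IsCompact B₃)
    (hv₁ : Convex ℝ B₁) (hv₂ : Convex ℝ B₂) :
    volume (B₁ + B₂) + volume (B₁ + B₃) ≤ volume (B₁ + B₂ + B₃) + volume B₁ := by
  obtain ⟨c, hcB, hBc⟩ :=
    (IsSeparable.of_separableSpace B₂).exists_seq_range_subset_subset_closure h₂
  set P := fun k : ℕ => convexHull ℝ (range fun i : Fin (k + 1) => c i)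
  have hPB (k : ℕ) : P k ⊆ B₂ :=
    convexHull_min (range_subset_iff.2 fun i => hcB ⟨i, rfl⟩) hv₂
  calc volume (B₁ + B₂) + volume (B₁ + B₃)
      ≤ (⨆ k, volume (B₁ + P k)) + volume (B₁ + B₃) := by
        gcongr
        exact measure_add_le_iSup_measure_add_convexHull volume hv₁ hBc
    _ = ⨆ k, (volume (B₁ + P k) + volume (B₁ + B₃)) := ENNReal.iSup_add _
    _ ≤ volume (B₁ + B₂ + B₃) + volume B₁ := iSup_le fun k =>
        (measure_add_convexHull_add_le volume h₁ hc₁ hv₁ h₃ hc₃ _).trans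
          (by gcongr; exact hPB k)

/-- **Supermodularity of volume for three convex bodies** (Theorem 4.5 of
Fradelizi–Madiman–Marsiglietti–Zvavitch): for nonempty compact convex sets
`B₁, B₂, B₃ ⊆ ℝⁿ`,
`Vol(B₁+B₂+B₃) + Vol(B₁) ≥ Vol(B₁+B₂) + Vol(B₁+B₃)` (Minkowski sums). -/
theorem volume_supermodular_three_convex {n : ℕ}
    (B₁ B₂ B₃ : Set (EuclideanSpace ℝ (Fin n)))
    (h₁ : B₁.Nonempty) (h₂ : B₂.Nonempty) (h₃ : B₃.Nonempty)
    (hc₁ : IsCompact B₁) (hc₂ : IsCompact B₂) (hc₃ : IsCompact B₃)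
    (hv₁ : Convex ℝ B₁) (hv₂ : Convex ℝ B₂) (hv₃ : Convex ℝ B₃) :
    volume (B₁ + B₂) + volume (B₁ + B₃) ≤ volume (B₁ + B₂ + B₃) + volume B₁ :=
  volume_supermodular_three_convex_general B₁ B₂ B₃ h₁ h₂ h₃ hc₁ hc₃ hv₁ hv₂
end

section
/- Let A, B, C be nonempty compact subsets of ℝ. Then Vol_1(A + B + C) + Vol_1(conv(A)) ≥ Vol_1(A + B) + Vol_1(A + C), where the sums of sets are Minkowski sums. -/
open MeasureTheory
open scoped Pointwise

/-- **Proposition 4.12 of Fradelizi–Madiman–Marsiglietti–Zvavitch**: for nonempty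
compact sets `A, B, C ⊆ ℝ`,
`Vol₁(A+B+C) + Vol₁(conv(A)) ≥ Vol₁(A+B) + Vol₁(A+C)` (Minkowski sums). -/
theorem volume_supermodular_convexHull_dim_one (A B C : Set ℝ)
    (hA : A.Nonempty) (hB : B.Nonempty) (hC : C.Nonempty)
    (hcA : IsCompact A) (hcB : IsCompact B) (hcC : IsCompact C) :
    volume (A + B) + volume (A + C) ≤ volume (A + B + C) + volume (convexHull ℝ A) := by
  obtain ⟨c₀, hc₀C, hc₀min⟩ := hcC.exists_isLeast hC
  obtain ⟨b₁, hb₁B, hb₁max⟩ := hcB.exists_isGreatest hB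
  set S : Set ℝ := c₀ +ᵥ (A + B) with hS
  set T : Set ℝ := b₁ +ᵥ (A + C) with hT
  have hSsub : S ⊆ A + B + C := by
    rintro x ⟨y, ⟨a, ha, b, hb, rfl⟩, rfl⟩
    exact ⟨a + b, ⟨a, ha, b, hb, rfl⟩, c₀, hc₀C, by simp only [vadd_eq_add]; ring⟩
  have hTsub : T ⊆ A + B + C := by
    rintro x ⟨y, ⟨a, ha, c, hc, rfl⟩, rfl⟩
    exact ⟨a + b₁, ⟨a, ha, b₁, hb₁B, rfl⟩, c, hc, by simp only [vadd_eq_add]; ring⟩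
  have hInter : S ∩ T ⊆ (b₁ + c₀) +ᵥ convexHull ℝ A := by
    rintro x ⟨⟨y, ⟨a, ha, b, hb, rfl⟩, rfl⟩, ⟨z, ⟨a', ha', c, hc, rfl⟩, hz⟩⟩
    set m : ℝ := c₀ + (a + b) - (b₁ + c₀) with hm
    have hb' : b ≤ b₁ := hb₁max hb
    have hc' : c₀ ≤ c := hc₀min hc
    have hz' : b₁ + (a' + c) = c₀ + (a + b) := by simpa only [vadd_eq_add] using hz
    have h1 : m ≤ a := by simp only [hm]; linarith
    have h2 : a' ≤ m := by simp only [hm]; linarith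
    have hmA : m ∈ convexHull ℝ A := by
      have hseg : Set.Icc a' a ⊆ convexHull ℝ A := by
        rw [← segment_eq_Icc (h2.trans h1)]
        exact (convex_convexHull ℝ A).segment_subset
          (subset_convexHull ℝ A ha') (subset_convexHull ℝ A ha)
      exact hseg ⟨h2, h1⟩
    refine ⟨m, hmA, by simp only [vadd_eq_add, hm]; ring⟩
  have hTmeas : MeasurableSet T := ((hcA.add hcC).measurableSet).const_vadd b₁
  calc volume (A + B) + volume (A + C)
      = volume S + volume T := by rw [hS, hT, measure_vadd, measure_vadd]
    _ = volume (S ∪ T) + volume (S ∩ T) := (measure_union_add_inter S hTmeas).symm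
    _ ≤ volume (A + B + C) + volume (convexHull ℝ A) := by
        refine add_le_add (measure_mono (Set.union_subset hSsub hTsub)) ?_
        calc volume (S ∩ T) ≤ volume ((b₁ + c₀) +ᵥ convexHull ℝ A) := measure_mono hInter
          _ = volume (convexHull ℝ A) := by rw [measure_vadd]
end

section
/- For every integer k ≥ 2, let n_k be the smallest positive multiple of k that is strictly greater than log(k) / (log(1 + 1/k) − log(2)/k). Then for every n ≥ n_k there exists a compact set A ⊆ ℝⁿ such that Vol_n(A(k+1)) < Vol_n(A(k)). In particular n_2 = 12, so for every n ≥ 12 there exists a compact set A ⊆ ℝⁿ with Vol_n(A(3)) < Vol_n(A(2)). -/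
/-!
Split `n ≥ k m` coordinates into `k` blocks of `m` coordinates and the rest, and let `A` be the
union of the `k` unit cubes of the blocks (times the unit cube in the remaining coordinates).
Then `A(k)` contains the box of side `1/k` on all blocks, of volume `k^(-k m)`. An average of
points taken from the cubes of blocks `g 0, …, g k` lies in the box whose side on block `b` is
`#g⁻¹(b)/(k+1)`; this box is flat unless `g` is onto, that is, unless one block is used twice and
every other once. Hence `Vol A(k+1) ≤ k (2/(k+1)^k)^m`, and the threshold condition on `k m` is
exactly `k (2/(k+1)^k)^m < k^(-k m)`.
-/

open MeasureTheory Finset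
open scoped Pointwise ENNReal

/-- The threshold `log(k) / (log(1 + 1/k) − log(2)/k)` of Theorem 3.3 of
Fradelizi–Madiman–Marsiglietti–Zvavitch. -/
noncomputable def FMMZthreshold (k : ℕ) : ℝ :=
  Real.log k / (Real.log (1 + 1 / (k : ℝ)) - Real.log 2 / (k : ℝ))

section CornerBox

variable {ι : Type*}

def cornerBox (r : ι → ℝ) : Set (EuclideanSpace ℝ ι) :=
  {x | ∀ j, x j ∈ Set.Icc 0 (r j)}

lemma cornerBox_eq_preimage (r : ι → ℝ) :
    cornerBox r = (MeasurableEquiv.toLp 2 (ι → ℝ)).symm ⁻¹' Set.Icc 0 r := by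
  ext x
  simp [cornerBox, Pi.le_def, forall_and]

lemma volume_cornerBox [Fintype ι] (r : ι → ℝ) :
    volume (cornerBox r) = ∏ j, ENNReal.ofReal (r j) := by
  rw [cornerBox_eq_preimage, (EuclideanSpace.volume_preserving_symm_measurableEquiv_toLp ι)
    |>.measure_preimage measurableSet_Icc.nullMeasurableSet, Real.volume_Icc_pi]
  simp

lemma isCompact_cornerBox [Fintype ι] (r : ι → ℝ) : IsCompact (cornerBox r) := by
  rw [cornerBox_eq_preimage]
  exact (EuclideanSpace.equiv ι ℝ).toHomeomorph.isCompact_preimage.2 isCompact_Icc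

lemma smul_sum_mem_cornerBox {α : Type*} (s : Finset α) {a : α → EuclideanSpace ℝ ι}
    {r : α → ι → ℝ} (ha : ∀ i ∈ s, a i ∈ cornerBox (r i)) {c : ℝ} (hc : 0 ≤ c) :
    c • ∑ i ∈ s, a i ∈ cornerBox (c • ∑ i ∈ s, r i) := by
  intro j
  simp only [PiLp.smul_apply, WithLp.ofLp_sum, Finset.sum_apply, Pi.smul_apply, smul_eq_mul]
  exact ⟨mul_nonneg hc (sum_nonneg fun i hi => (ha i hi j).1),
    mul_le_mul_of_nonneg_left (sum_le_sum fun i hi => (ha i hi j).2) hc⟩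

end CornerBox

section MinkAvg

variable {n : ℕ}

lemma minkAvg_iUnion_cornerBox_subset {κ : Type*} (r : κ → Fin n → ℝ) (N : ℕ) :
    minkAvg (⋃ b, cornerBox (r b)) N ⊆ ⋃ g : Fin N → κ, cornerBox ((N : ℝ)⁻¹ • ∑ i, r (g i)) := by
  rintro x ⟨a, ha, rfl⟩
  choose g hg using fun i => Set.mem_iUnion.1 (ha i)
  exact Set.mem_iUnion.2 ⟨g, smul_sum_mem_cornerBox _ (fun i _ => hg i) (by positivity)⟩

/-- The summands are obtained by splitting each coordinate of `x` in proportion to the sides. -/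
lemma cornerBox_smul_sum_subset_minkAvg {N : ℕ} (hN : N ≠ 0) (r : Fin N → Fin n → ℝ)
    (hr : 0 ≤ r) : cornerBox ((N : ℝ)⁻¹ • ∑ i, r i) ⊆ minkAvg (⋃ i, cornerBox (r i)) N := by
  intro x hx
  have hN' : (0 : ℝ) < N := Nat.cast_pos.2 (Nat.pos_of_ne_zero hN)
  set S : Fin n → ℝ := ∑ i, r i
  set t : Fin n → ℝ := fun j => N * x j / S j
  have hx' : ∀ j, 0 ≤ x j ∧ N * x j ≤ S j := fun j => by
    have := hx j
    simp only [Pi.smul_apply, smul_eq_mul, Set.mem_Icc] at this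
    refine ⟨this.1, ?_⟩
    rw [← le_inv_mul_iff₀ (by positivity)]
    exact this.2
  have hS : ∀ j, 0 ≤ S j := fun j => by
    simpa only [S, Finset.sum_apply] using sum_nonneg fun i _ => hr i j
  refine ⟨fun i => WithLp.toLp 2 (t * r i), fun i => Set.mem_iUnion.2 ⟨i, fun j => ?_⟩, ?_⟩
  · have ht : 0 ≤ t j ∧ t j ≤ 1 :=
      ⟨div_nonneg (mul_nonneg (Nat.cast_nonneg N) (hx' j).1) (hS j),
        div_le_one_of_le₀ (hx' j).2 (hS j)⟩
    exact ⟨mul_nonneg ht.1 (hr i j), mul_le_of_le_one_left (hr i j) ht.2⟩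
  · ext j
    simp only [PiLp.smul_apply, WithLp.ofLp_sum, Finset.sum_apply, Pi.mul_apply, smul_eq_mul,
      ← Finset.mul_sum]
    have hSj : ∑ i, r i j = S j := by simp only [S, Finset.sum_apply]
    rw [hSj]
    rcases eq_or_ne (S j) 0 with hS0 | hS0
    · have : x j = 0 := le_antisymm (by nlinarith [hx' j]) (hx' j).1
      simp [t, hS0, this]
    · simp only [t]
      field_simp

end MinkAvg

section Blocks

variable {ι κ μ ρ : Type*}

def blockSides (e : ι ≃ (κ × μ) ⊕ ρ) (f : κ → ℝ) : ι → ℝ :=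
  fun j => Sum.elim (fun p => f p.1) (fun _ => 1) (e j)

lemma blockSides_nonneg (e : ι ≃ (κ × μ) ⊕ ρ) {f : κ → ℝ} (hf : 0 ≤ f) : 0 ≤ blockSides e f :=
  fun j => by
    rcases hj : e j with p | _
    · simpa [blockSides, hj] using hf p.1
    · simp [blockSides, hj]

lemma smul_sum_blockSides (e : ι ≃ (κ × μ) ⊕ ρ) {N : ℕ} (hN : N ≠ 0) (f : Fin N → κ → ℝ) :
    (N : ℝ)⁻¹ • ∑ i, blockSides e (f i) = blockSides e ((N : ℝ)⁻¹ • ∑ i, f i) := by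
  ext j
  rcases hj : e j with p | p <;> simp [blockSides, hj, Finset.mul_sum, hN]

lemma volume_cornerBox_blockSides [Fintype ι] [Fintype κ] [Fintype μ] [Fintype ρ]
    (e : ι ≃ (κ × μ) ⊕ ρ) {f : κ → ℝ} (hf : 0 ≤ f) :
    volume (cornerBox (blockSides e f)) = ENNReal.ofReal (∏ b, f b) ^ Fintype.card μ := by
  rw [volume_cornerBox, ENNReal.ofReal_prod_of_nonneg (fun b _ => hf b), ← Finset.prod_pow]
  simp only [blockSides]
  rw [e.prod_comp (fun x => ENNReal.ofReal (Sum.elim (fun p => f p.1) (fun _ => 1) x)),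
    Fintype.prod_sum_type, Fintype.prod_prod_type]
  simp

end Blocks

lemma exists_card_fiber_eq_update {α β : Type*} [Fintype α] [Fintype β] [DecidableEq β]
    {f : α → β} (hf : Function.Surjective f) (hcard : Fintype.card α = Fintype.card β + 1) :
    ∃ b₀, ∀ b, #{a | f a = b} = Function.update (1 : β → ℕ) b₀ 2 b := by
  set c : β → ℕ := fun b => #{a | f a = b}
  have hc : ∀ b, 1 ≤ c b := fun b => by
    obtain ⟨a, rfl⟩ := hf b
    exact card_pos.2 ⟨a, by simp⟩
  have hsum : ∑ b, (c b - 1) = 1 := by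
    rw [sum_tsub_distrib _ fun b _ => hc b,
      ← card_eq_sum_card_fiberwise fun a _ => mem_univ (f a)]
    simp [hcard]
  obtain ⟨b₀, -, hb₀⟩ := exists_ne_zero_of_sum_ne_zero (hsum.symm ▸ one_ne_zero)
  refine ⟨b₀, fun b => show c b = _ from ?_⟩
  have hle (s : Finset β) : ∑ x ∈ s, (c x - 1) ≤ 1 :=
    (sum_le_sum_of_subset (subset_univ s)).trans hsum.le
  rcases eq_or_ne b b₀ with rfl | hb
  · have := hle {b}
    simp only [sum_singleton] at this
    simp only [Function.update_self]
    omega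
  · have := hle {b, b₀}
    rw [sum_pair hb] at this
    simp only [Function.update_of_ne hb, Pi.one_apply]
    have := hc b
    omega

lemma sum_pi_single_one_apply {α β R : Type*} [Fintype α] [DecidableEq β]
    [AddCommMonoidWithOne R] (f : α → β) (b : β) :
    (∑ a, Pi.single (f a) (1 : R) : β → R) b = #{a | f a = b} := by
  simp [Finset.sum_apply, Pi.single_apply, eq_comm]

section OrthogonalCubes

variable {n k m : ℕ} {ρ : Type*}

def orthogonalCubes (e : Fin n ≃ (Fin k × Fin m) ⊕ ρ) : Set (EuclideanSpace ℝ (Fin n)) :=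
  ⋃ b, cornerBox (blockSides e (Pi.single b 1))

lemma isCompact_orthogonalCubes (e : Fin n ≃ (Fin k × Fin m) ⊕ ρ) :
    IsCompact (orthogonalCubes e) :=
  isCompact_iUnion fun _ => isCompact_cornerBox _

lemma ofReal_pow_le_volume_minkAvg_orthogonalCubes [Fintype ρ]
    (e : Fin n ≃ (Fin k × Fin m) ⊕ ρ) (hk : k ≠ 0) :
    ENNReal.ofReal ((k : ℝ)⁻¹ ^ k) ^ m ≤ volume (minkAvg (orthogonalCubes e) k) := by
  have hsub := cornerBox_smul_sum_subset_minkAvg hk (fun b => blockSides e (Pi.single b 1))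
    fun b => blockSides_nonneg e (Pi.single_nonneg.2 zero_le_one)
  have hsum : ∑ b : Fin k, Pi.single b (1 : ℝ) = 1 := univ_sum_single 1
  rw [smul_sum_blockSides e hk, hsum] at hsub
  calc ENNReal.ofReal ((k : ℝ)⁻¹ ^ k) ^ m
      = volume (cornerBox (blockSides e ((k : ℝ)⁻¹ • 1 : Fin k → ℝ))) := by
        rw [volume_cornerBox_blockSides e (smul_nonneg (by positivity) zero_le_one)]
        simp
    _ ≤ _ := measure_mono hsub

lemma volume_minkAvg_succ_orthogonalCubes_le [Fintype ρ] (e : Fin n ≃ (Fin k × Fin m) ⊕ ρ)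
    (hm : m ≠ 0) :
    volume (minkAvg (orthogonalCubes e) (k + 1)) ≤
      k * ENNReal.ofReal (2 / ((k : ℝ) + 1) ^ k) ^ m := by
  set box : (Fin k → ℝ) → Set (EuclideanSpace ℝ (Fin n)) :=
    fun f => cornerBox (blockSides e (((k + 1 : ℕ) : ℝ)⁻¹ • f))
  have hvol (f : Fin k → ℝ) (hf : 0 ≤ f) :
      volume (box f) = ENNReal.ofReal (∏ b, ((k : ℝ) + 1)⁻¹ * f b) ^ m := by
    rw [volume_cornerBox_blockSides e (smul_nonneg (by positivity) hf)]
    simp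
  have hsub : minkAvg (orthogonalCubes e) (k + 1) ⊆
      ⋃ g : Fin (k + 1) → Fin k, box (∑ i, Pi.single (g i) 1) := by
    have := minkAvg_iUnion_cornerBox_subset (fun b => blockSides e (Pi.single b 1)) (k + 1)
    simp only [smul_sum_blockSides e (Nat.add_one_ne_zero k)] at this
    exact this
  have hcount (g : Fin (k + 1) → Fin k) (b : Fin k) :
      (∑ i, Pi.single (g i) (1 : ℝ) : Fin k → ℝ) b = #{i | g i = b} :=
    sum_pi_single_one_apply g b
  have hnonneg (g : Fin (k + 1) → Fin k) : 0 ≤ (∑ i, Pi.single (g i) (1 : ℝ) : Fin k → ℝ) :=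
    fun b => by rw [hcount]; positivity
  have hnull (g : Fin (k + 1) → Fin k) (hg : ¬ Function.Surjective g) :
      volume (box (∑ i, Pi.single (g i) 1)) = 0 := by
    obtain ⟨b, hb⟩ := not_forall.1 hg
    rw [hvol _ (hnonneg g), prod_eq_zero (mem_univ b)]
    · simp [hm]
    · simp [hcount, not_exists.1 hb]
  have hgood (g : Fin (k + 1) → Fin k) (hg : Function.Surjective g) :
      ∃ b₀, ∑ i, Pi.single (g i) (1 : ℝ) = Function.update (1 : Fin k → ℝ) b₀ 2 := by
    obtain ⟨b₀, hb₀⟩ := exists_card_fiber_eq_update hg (by simp)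
    refine ⟨b₀, funext fun b => ?_⟩
    rw [hcount, hb₀]
    rcases eq_or_ne b b₀ with rfl | hb <;> simp [*]
  calc volume (minkAvg (orthogonalCubes e) (k + 1))
      ≤ volume ((⋃ (g) (_ : ¬ Function.Surjective g), box (∑ i, Pi.single (g i) 1)) ∪
          ⋃ b₀, box (Function.update (1 : Fin k → ℝ) b₀ 2)) := by
        refine measure_mono (hsub.trans (Set.iUnion_subset fun g => ?_))
        by_cases hg : Function.Surjective g
        · obtain ⟨b₀, hb₀⟩ := hgood g hg
          exact (Set.subset_iUnion_of_subset b₀ (by rw [hb₀])).trans Set.subset_union_right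
        · exact fun x hx => Or.inl (Set.mem_iUnion₂.2 ⟨g, hg, hx⟩)
    _ ≤ 0 + ∑ b₀, volume (box (Function.update (1 : Fin k → ℝ) b₀ 2)) :=
        (measure_union_le _ _).trans (add_le_add
          (measure_iUnion_null fun g => measure_iUnion_null fun hg => hnull g hg).le
          (measure_iUnion_fintype_le _ _))
    _ = k * ENNReal.ofReal (2 / ((k : ℝ) + 1) ^ k) ^ m := by
        have hupd (b₀ : Fin k) : 0 ≤ Function.update (1 : Fin k → ℝ) b₀ 2 := by
          intro b
          rcases eq_or_ne b b₀ with rfl | hb <;> simp [*]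
        have hprod (b₀ : Fin k) :
            ∏ b, ((k : ℝ) + 1)⁻¹ * Function.update (1 : Fin k → ℝ) b₀ 2 b =
              2 / ((k : ℝ) + 1) ^ k := by
          rw [prod_mul_distrib, prod_update_of_mem (mem_univ b₀)]
          simp [div_eq_mul_inv, mul_comm]
        simp [hvol _ (hupd _), hprod]

end OrthogonalCubes

lemma natCast_mul_ofReal_pow_lt_ofReal_pow {k m : ℕ} (hk : k ≠ 0)
    (h : (k : ℝ) < ((1 + 1 / (k : ℝ)) ^ k / 2) ^ m) :
    (k : ℝ≥0∞) * ENNReal.ofReal (2 / ((k : ℝ) + 1) ^ k) ^ m <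
      ENNReal.ofReal ((k : ℝ)⁻¹ ^ k) ^ m := by
  have hk' : (0 : ℝ) < k := Nat.cast_pos.2 (Nat.pos_of_ne_zero hk)
  have hq : (1 + 1 / (k : ℝ)) ^ k / 2 = (k : ℝ)⁻¹ ^ k / (2 / ((k : ℝ) + 1) ^ k) := by
    field_simp
    rw [div_pow, one_div_pow, div_mul_eq_mul_div, one_mul]
  rw [hq, div_pow, lt_div_iff₀ (by positivity)] at h
  rw [← ENNReal.ofReal_natCast, ← ENNReal.ofReal_pow (by positivity),
    ← ENNReal.ofReal_pow (by positivity), ← ENNReal.ofReal_mul hk'.le,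
    ENNReal.ofReal_lt_ofReal_iff (by positivity)]
  exact h

theorem exists_isCompact_volume_minkAvg_succ_lt_of_lt_pow {n k m : ℕ} {ρ : Type*} [Fintype ρ]
    (e : Fin n ≃ (Fin k × Fin m) ⊕ ρ) (hk : k ≠ 0) (hm : m ≠ 0)
    (h : (k : ℝ) < ((1 + 1 / (k : ℝ)) ^ k / 2) ^ m) :
    ∃ A : Set (EuclideanSpace ℝ (Fin n)), IsCompact A ∧
      volume (minkAvg A (k + 1)) < volume (minkAvg A k) :=
  ⟨orthogonalCubes e, isCompact_orthogonalCubes e,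
    ((volume_minkAvg_succ_orthogonalCubes_le e hm).trans_lt
      (natCast_mul_ofReal_pow_lt_ofReal_pow hk h)).trans_le
      (ofReal_pow_le_volume_minkAvg_orthogonalCubes e hk)⟩

lemma two_lt_one_add_one_div_pow {k : ℕ} (hk : 2 ≤ k) : 2 < (1 + 1 / (k : ℝ)) ^ k := by
  have hk' : (2 : ℝ) ≤ k := by exact_mod_cast hk
  have := one_add_mul_self_lt_rpow_one_add (s := 1 / (k : ℝ)) (by
    have : 0 < 1 / (k : ℝ) := by positivity
    linarith) (by positivity) (p := k) (by linarith)
  rwa [Real.rpow_natCast, mul_one_div_cancel (by positivity), one_add_one_eq_two] at this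

lemma FMMZthreshold_eq {k : ℕ} (hk : k ≠ 0) :
    FMMZthreshold k = k * Real.log k / Real.log ((1 + 1 / (k : ℝ)) ^ k / 2) := by
  have hk' : (k : ℝ) ≠ 0 := Nat.cast_ne_zero.2 hk
  rw [FMMZthreshold, Real.log_div (by positivity) two_ne_zero, Real.log_pow]
  field_simp

lemma FMMZthreshold_lt_mul_iff {k : ℕ} (hk : 2 ≤ k) (m : ℕ) :
    FMMZthreshold k < k * m ↔ (k : ℝ) < ((1 + 1 / (k : ℝ)) ^ k / 2) ^ m := by
  have hk' : (0 : ℝ) < k := by positivity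
  have hq : 1 < (1 + 1 / (k : ℝ)) ^ k / 2 := by
    linarith [two_lt_one_add_one_div_pow hk]
  rw [FMMZthreshold_eq (by omega), div_lt_iff₀ (Real.log_pos hq), mul_assoc,
    mul_lt_mul_iff_right₀ hk', ← Real.log_pow,
    Real.log_lt_log_iff hk' (pow_pos (by linarith) _)]

theorem isLeast_FMMZthreshold_two :
    IsLeast {m : ℕ | 0 < m ∧ 2 ∣ m ∧ FMMZthreshold 2 < (m : ℝ)} 12 := by
  have key (m : ℕ) : FMMZthreshold 2 < ((2 * m : ℕ) : ℝ) ↔ 2 < (9 / 8 : ℝ) ^ m := by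
    have := FMMZthreshold_lt_mul_iff le_rfl m
    norm_num at this ⊢
    exact this
  refine ⟨⟨by norm_num, by norm_num, (key 6).2 (by norm_num)⟩, ?_⟩
  rintro _ ⟨-, ⟨m, rfl⟩, hm⟩
  by_contra! h
  have := (key m).1 hm
  have : (9 / 8 : ℝ) ^ m ≤ (9 / 8) ^ 5 := pow_le_pow_right₀ (by norm_num) (by omega)
  norm_num at this
  linarith

theorem exists_isCompact_volume_minkAvg_succ_lt {n k m : ℕ} (hk : 2 ≤ k) (hn : k * m ≤ n)
    (h : FMMZthreshold k < (k * m : ℕ)) :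
    ∃ A : Set (EuclideanSpace ℝ (Fin n)), IsCompact A ∧
      volume (minkAvg A (k + 1)) < volume (minkAvg A k) := by
  rw [Nat.cast_mul, FMMZthreshold_lt_mul_iff hk] at h
  have hm : m ≠ 0 := by
    rintro rfl
    norm_num at h
    omega
  have e : Fin n ≃ (Fin k × Fin m) ⊕ Fin (n - k * m) := Fintype.equivOfCardEq (by simp; omega)
  exact exists_isCompact_volume_minkAvg_succ_lt_of_lt_pow e (by omega) hm h

/-- **A counterexample to the monotonicity of volumes of Minkowski averages**
(Theorem 3.3 of Fradelizi–Madiman–Marsiglietti–Zvavitch): for each `k ≥ 2`, letting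
`n_k` be the smallest positive multiple of `k` exceeding
`log(k)/(log(1+1/k) − log(2)/k)`, for every `n ≥ n_k` there is a compact set
`A ⊆ ℝⁿ` with `Vol_n(A(k+1)) < Vol_n(A(k))`. In particular `n₂ = 12`, so for every
`n ≥ 12` there is a compact `A ⊆ ℝⁿ` with `Vol_n(A(3)) < Vol_n(A(2))`. -/
theorem exists_compact_volume_minkAvg_decreasing :
    (∀ k : ℕ, 2 ≤ k → ∀ nk : ℕ,
      IsLeast {m : ℕ | 0 < m ∧ k ∣ m ∧ FMMZthreshold k < (m : ℝ)} nk →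
      ∀ n : ℕ, nk ≤ n →
        ∃ A : Set (EuclideanSpace ℝ (Fin n)), IsCompact A ∧
          volume (minkAvg A (k + 1)) < volume (minkAvg A k)) ∧
    IsLeast {m : ℕ | 0 < m ∧ 2 ∣ m ∧ FMMZthreshold 2 < (m : ℝ)} 12 ∧
    (∀ n : ℕ, 12 ≤ n →
      ∃ A : Set (EuclideanSpace ℝ (Fin n)), IsCompact A ∧
        volume (minkAvg A 3) < volume (minkAvg A 2)) := by
  refine ⟨?_, isLeast_FMMZthreshold_two, fun n hn =>
    exists_isCompact_volume_minkAvg_succ_lt (m := 6) le_rfl hn isLeast_FMMZthreshold_two.1.2.2⟩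
  rintro k hk _ ⟨⟨-, ⟨m, rfl⟩, h⟩, -⟩ n hn
  exact exists_isCompact_volume_minkAvg_succ_lt hk hn h
end

section
/- For every nonempty compact subset A of ℝⁿ, Schneider's non-convexity index satisfies c(A) ≤ n. -/
/-!
By Carathéodory, a point `x` of `conv A ⊆ ℝⁿ` is a convex combination of at most `n + 1` points
of `A`, so one of the weights, say that of `a ∈ A`, is at least `1 / (n + 1)`. Then
`(n + 1) x - a` is a nonnegative combination of points of `A` of total weight `n`, i.e. a point of
`n • conv A`. Hence `A + n • conv A = (n + 1) • conv A`, which is convex.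
-/

open scoped Pointwise
open Module

/-- **Schneider's non-convexity index**: `c(A) = inf {λ ≥ 0 : A + λ·conv(A) is convex}`,
where the sum is a Minkowski sum. -/
noncomputable def schneiderIndex {n : ℕ} (A : Set (EuclideanSpace ℝ (Fin n))) : ℝ :=
  sInf {l : ℝ | 0 ≤ l ∧ Convex ℝ (A + l • convexHull ℝ A)}

section

variable {𝕜 E : Type*} [Field 𝕜] [LinearOrder 𝕜] [IsStrictOrderedRing 𝕜]
  [AddCommGroup E] [Module 𝕜 E]

theorem Finset.sum_smul_mem_sum_smul_convexHull {ι : Type*} (s : Finset ι) {A : Set E}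
    {w : ι → 𝕜} {z : ι → E} (hw₀ : ∀ i ∈ s, 0 ≤ w i) (hz : ∀ i ∈ s, z i ∈ A)
    (hA : A.Nonempty) :
    ∑ i ∈ s, w i • z i ∈ (∑ i ∈ s, w i) • convexHull 𝕜 A := by
  rcases (Finset.sum_nonneg hw₀).eq_or_lt with hws | hws
  · have hw : ∀ i ∈ s, w i = 0 := (Finset.sum_eq_zero_iff_of_nonneg hw₀).1 hws.symm
    rw [← hws, Set.zero_smul_set (hA.convexHull), Finset.sum_eq_zero fun i hi => by
      rw [hw i hi, zero_smul]]
    rfl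
  · rw [← smul_inv_smul₀ hws.ne' (∑ i ∈ s, w i • z i)]
    exact Set.smul_mem_smul_set (s.centerMass_mem_convexHull hw₀ hws hz)

theorem smul_sum_mem_add_smul_convexHull {ι : Type*} [Fintype ι] {A : Set E}
    {w : ι → 𝕜} {z : ι → E} {m : ℕ} (hw₀ : ∀ i, 0 ≤ w i) (hw₁ : ∑ i, w i = 1)
    (hz : ∀ i, z i ∈ A) (hcard : Fintype.card ι ≤ m + 1) :
    ((m : 𝕜) + 1) • ∑ i, w i • z i ∈ A + (m : 𝕜) • convexHull 𝕜 A := by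
  classical
  have hne : (Finset.univ : Finset ι).Nonempty :=
    Finset.univ_nonempty_iff.2 <| by
      by_contra h
      simp [not_nonempty_iff.1 h] at hw₁
  obtain ⟨j, -, hj⟩ : ∃ j ∈ Finset.univ, (1 : 𝕜) ≤ ((m : 𝕜) + 1) * w j := by
    refine Finset.exists_le_of_sum_le hne ?_
    rw [← Finset.mul_sum, hw₁, mul_one, Finset.sum_const, Finset.card_univ, nsmul_one]
    exact_mod_cast hcard
  set v : ι → 𝕜 := fun i => ((m : 𝕜) + 1) * w i - if i = j then 1 else 0
  have hv₀ : ∀ i ∈ Finset.univ, 0 ≤ v i := by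
    intro i _
    by_cases hij : i = j
    · simp [v, hij, hj]
    · simpa [v, hij] using mul_nonneg (by positivity) (hw₀ i)
  have hv₁ : ∑ i, v i = m := by
    simp [v, Finset.sum_sub_distrib, ← Finset.mul_sum, hw₁]
  have hvz : ∑ i, v i • z i = ((m : 𝕜) + 1) • ∑ i, w i • z i - z j := by
    simp [v, sub_smul, mul_smul, Finset.sum_sub_distrib, ← Finset.smul_sum, ite_smul]
  refine Set.mem_add.2 ⟨z j, hz j, _, ?_, add_sub_cancel _ _⟩
  rw [← hvz, ← hv₁]
  exact Finset.univ.sum_smul_mem_sum_smul_convexHull hv₀ (fun i _ => hz i) ⟨z j, hz j⟩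

theorem add_finrank_smul_convexHull_eq [FiniteDimensional 𝕜 E] (A : Set E) :
    A + (finrank 𝕜 E : 𝕜) • convexHull 𝕜 A = ((finrank 𝕜 E : 𝕜) + 1) • convexHull 𝕜 A := by
  refine subset_antisymm ?_ ?_
  · rw [add_comm, (convex_convexHull 𝕜 A).add_smul (by positivity) zero_le_one, one_smul]
    exact Set.add_subset_add_left (subset_convexHull 𝕜 A)
  · rintro _ ⟨x, hx, rfl⟩
    obtain ⟨ι, _, z, w, hzA, hz, hw₀, hw₁, rfl⟩ := eq_pos_convex_span_of_mem_convexHull hx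
    exact smul_sum_mem_add_smul_convexHull (fun i => (hw₀ i).le) hw₁
      (fun i => hzA ⟨i, rfl⟩)
      (hz.card_le_finrank_succ.trans (Nat.add_le_add_right (Submodule.finrank_le _) 1))

theorem convex_add_finrank_smul_convexHull [FiniteDimensional 𝕜 E] (A : Set E) :
    Convex 𝕜 (A + (finrank 𝕜 E : 𝕜) • convexHull 𝕜 A) := by
  rw [add_finrank_smul_convexHull_eq]
  exact (convex_convexHull 𝕜 A).smul _

end

theorem schneiderIndex_le_dim_general {n : ℕ} (A : Set (EuclideanSpace ℝ (Fin n))) :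
    schneiderIndex A ≤ n := by
  have hconv := convex_add_finrank_smul_convexHull (𝕜 := ℝ) A
  rw [finrank_euclideanSpace_fin] at hconv
  exact csInf_le ⟨0, fun l hl => hl.1⟩ ⟨n.cast_nonneg, hconv⟩

/-- **Schneider's theorem** (Theorem 2.14 in Fradelizi–Madiman–Marsiglietti–Zvavitch):
for every nonempty compact `A ⊆ ℝⁿ`, Schneider's non-convexity index satisfies
`c(A) ≤ n`. -/
theorem schneiderIndex_le_dim {n : ℕ} (A : Set (EuclideanSpace ℝ (Fin n)))
    (hne : A.Nonempty) (hcpt : IsCompact A) :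
    schneiderIndex A ≤ n :=
  schneiderIndex_le_dim_general A
end

section
/- Let A, B, C be nonempty compact subsets of ℝⁿ. Then c(A + B + C) ≤ max{c(A + B), c(B + C)}, where the sums of sets are Minkowski sums. -/
open MeasureTheory
open scoped Pointwise

section Aux

variable {n : ℕ}

local notation "V" => EuclideanSpace ℝ (Fin n)

/-- If `S + l•conv S` is convex then it equals `(1+l)•conv S`. -/
lemma aux_eq_of_convex {S : Set V} {l : ℝ} (hl : 0 ≤ l)
    (h : Convex ℝ (S + l • convexHull ℝ S)) :
    S + l • convexHull ℝ S = (1 + l) • convexHull ℝ S := by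
  have h1 : convexHull ℝ (S + l • convexHull ℝ S) = S + l • convexHull ℝ S :=
    h.convexHull_eq
  have h2 : convexHull ℝ (S + l • convexHull ℝ S)
      = convexHull ℝ S + l • convexHull ℝ S := by
    rw [convexHull_add, convexHull_smul, (convex_convexHull ℝ S).convexHull_eq]
  rw [← h1, h2, (convex_convexHull ℝ S).add_smul zero_le_one hl, one_smul]

lemma aux_convex_of_eq {S : Set V} {l : ℝ}
    (h : S + l • convexHull ℝ S = (1 + l) • convexHull ℝ S) :
    Convex ℝ (S + l • convexHull ℝ S) := by
  rw [h]; exact (convex_convexHull ℝ S).smul _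

/-- Upward monotonicity of the convexity set. -/
lemma aux_mono {S : Set V} {l m : ℝ} (hl : 0 ≤ l) (hlm : l ≤ m)
    (h : Convex ℝ (S + l • convexHull ℝ S)) :
    Convex ℝ (S + m • convexHull ℝ S) := by
  have hK : Convex ℝ (convexHull ℝ S) := convex_convexHull ℝ S
  have hsplit : m • convexHull ℝ S = l • convexHull ℝ S + (m - l) • convexHull ℝ S := by
    rw [← hK.add_smul hl (by linarith), add_sub_cancel]
  rw [hsplit, ← add_assoc]
  exact h.add (hK.smul _)

/-- Schneider's bound: `A + n • conv A` is convex for any nonempty `A ⊆ ℝⁿ`. -/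
lemma aux_dim_mem {A : Set V} (hA : A.Nonempty) :
    Convex ℝ (A + (n : ℝ) • convexHull ℝ A) := by
  rcases Nat.eq_zero_or_pos n with hn | hn
  · subst hn
    exact Set.Subsingleton.convex Set.subsingleton_of_subsingleton
  have hn0 : (0 : ℝ) < (n : ℝ) := by exact_mod_cast hn
  have hK : Convex ℝ (convexHull ℝ A) := convex_convexHull ℝ A
  suffices h : A + (n : ℝ) • convexHull ℝ A = ((1 : ℝ) + n) • convexHull ℝ A by
    rw [h]; exact hK.smul _
  apply Set.Subset.antisymm
  · calc A + (n : ℝ) • convexHull ℝ A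
        ⊆ convexHull ℝ A + (n : ℝ) • convexHull ℝ A :=
          Set.add_subset_add_right (subset_convexHull ℝ A)
      _ = ((1 : ℝ) + n) • convexHull ℝ A := by
          rw [hK.add_smul zero_le_one (by positivity), one_smul]
  · rintro _ ⟨y, hy, rfl⟩
    obtain ⟨ι, hfin, z, w, hzA, hai, hwpos, hwsum, hwz⟩ :=
      eq_pos_convex_span_of_mem_convexHull hy
    have hcard : (Fintype.card ι : ℝ) ≤ (n : ℝ) + 1 := by
      have h1 : Fintype.card ι ≤ n + 1 := by
        refine hai.card_le_finrank_succ.trans ?_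
        have h2 := Submodule.finrank_le (vectorSpan ℝ (Set.range z))
        rw [finrank_euclideanSpace_fin] at h2
        omega
      exact_mod_cast h1
    have hune : (Finset.univ : Finset ι).Nonempty := by
      rw [Finset.univ_nonempty_iff]
      by_contra h
      rw [not_nonempty_iff] at h
      rw [Finset.univ_eq_empty, Finset.sum_empty] at hwsum
      norm_num at hwsum
    have hj : ∃ j : ι, 1 ≤ ((n : ℝ) + 1) * w j := by
      by_contra h
      push_neg at h
      have hlt : ∑ i : ι, ((n : ℝ) + 1) * w i < ∑ _i : ι, (1 : ℝ) :=
        Finset.sum_lt_sum_of_nonempty hune fun i _ => h i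
      rw [← Finset.mul_sum, hwsum, mul_one, Finset.sum_const, Finset.card_univ,
        nsmul_eq_mul, mul_one] at hlt
      linarith
    obtain ⟨j, hj⟩ := hj
    classical
    set u : ι → ℝ := fun i => ((n : ℝ) + 1) * w i - (if i = j then 1 else 0) with hu
    have hu0 : ∀ i, 0 ≤ u i := by
      intro i
      by_cases hij : i = j
      · subst hij; simp only [hu, if_true, eq_self_iff_true]; linarith
      · simp only [hu, if_neg hij, sub_zero]
        exact mul_nonneg (by positivity) (hwpos i).le
    have husum : ∑ i : ι, u i = (n : ℝ) := by
      simp only [hu]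
      rw [Finset.sum_sub_distrib, ← Finset.mul_sum, hwsum, mul_one,
        Finset.sum_ite_eq' Finset.univ j (fun _ => (1 : ℝ)), if_pos (Finset.mem_univ j)]
      ring
    have huz : ∑ i : ι, u i • z i = ((n : ℝ) + 1) • y - z j := by
      simp only [hu, sub_smul, ite_smul, one_smul, zero_smul]
      rw [Finset.sum_sub_distrib, Finset.sum_ite_eq' Finset.univ j (fun i => z i),
        if_pos (Finset.mem_univ j)]
      congr 1
      rw [← hwz, Finset.smul_sum]
      exact Finset.sum_congr rfl fun i _ => by rw [smul_smul]
    have hcm : Finset.univ.centerMass u z ∈ convexHull ℝ A :=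
      Finset.centerMass_mem_convexHull _ (fun i _ => hu0 i)
        (by rw [husum]; exact hn0) (fun i _ => hzA ⟨i, rfl⟩)
    have hcmval : (n : ℝ) • Finset.univ.centerMass u z = ((n : ℝ) + 1) • y - z j := by
      rw [Finset.centerMass, husum, huz, smul_inv_smul₀ (ne_of_gt hn0)]
    refine Set.mem_add.2 ⟨z j, hzA ⟨j, rfl⟩,
      (n : ℝ) • Finset.univ.centerMass u z, Set.smul_mem_smul_set hcm, ?_⟩
    rw [hcmval, add_comm (1 : ℝ) (n : ℝ)]
    abel

/-- The key combinatorial lemma. -/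
lemma aux_key {A B C : Set V} {l : ℝ} (hl : 0 ≤ l)
    (h1 : Convex ℝ (A + B + l • convexHull ℝ (A + B)))
    (h2 : Convex ℝ (B + C + l • convexHull ℝ (B + C))) :
    Convex ℝ (A + B + C + l • convexHull ℝ (A + B + C)) := by
  set KA := convexHull ℝ A with hKA
  set KB := convexHull ℝ B with hKB
  set KC := convexHull ℝ C with hKC
  have hcKA : Convex ℝ KA := convex_convexHull ℝ A
  have hcKB : Convex ℝ KB := convex_convexHull ℝ B
  have hcKC : Convex ℝ KC := convex_convexHull ℝ C
  have hAB : A + B + l • (KA + KB) = (1 + l) • (KA + KB) := by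
    have h := aux_eq_of_convex hl h1
    rwa [convexHull_add] at h
  have hBC : B + C + l • (KB + KC) = (1 + l) • (KB + KC) := by
    have h := aux_eq_of_convex hl h2
    rwa [convexHull_add] at h
  apply aux_convex_of_eq
  rw [convexHull_add, convexHull_add, ← hKA, ← hKB, ← hKC]
  have h1l : (0 : ℝ) < 1 + l := by linarith
  apply Set.Subset.antisymm
  · have hsub : A + B + C ⊆ KA + KB + KC :=
      Set.add_subset_add (Set.add_subset_add (subset_convexHull ℝ A)
        (subset_convexHull ℝ B)) (subset_convexHull ℝ C)
    have hconv : Convex ℝ (KA + KB + KC) := (hcKA.add hcKB).add hcKC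
    calc A + B + C + l • (KA + KB + KC)
        ⊆ (KA + KB + KC) + l • (KA + KB + KC) := Set.add_subset_add_right hsub
      _ = (1 + l) • (KA + KB + KC) := by
          rw [hconv.add_smul zero_le_one hl, one_smul]
  · rintro x ⟨s, hs, rfl⟩
    obtain ⟨pq, hpq, r, hr, rfl⟩ := Set.mem_add.1 hs
    obtain ⟨p, hp, q, hq, rfl⟩ := Set.mem_add.1 hpq
    -- step 1: use hAB on p + q
    have hstep1 : (1 + l) • (p + q) ∈ A + B + l • (KA + KB) := by
      rw [hAB]
      exact Set.smul_mem_smul_set (Set.add_mem_add hp hq)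
    obtain ⟨ab, hab, lw, hlw, heq1⟩ := Set.mem_add.1 hstep1
    obtain ⟨a, ha, b, hb, rfl⟩ := Set.mem_add.1 hab
    obtain ⟨w1, hw1, rfl⟩ := hlw
    obtain ⟨p₁, hp₁, q₁, hq₁, rfl⟩ := Set.mem_add.1 hw1
    -- define q₂
    set q₂ : V := (1 + l)⁻¹ • (b + l • q₁) with hq₂def
    have hq₂ : q₂ ∈ KB := by
      have hb' : b ∈ KB := subset_convexHull ℝ B hb
      have hcomb := hcKB hb' hq₁ (a := (1 + l)⁻¹) (b := l * (1 + l)⁻¹)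
        (by positivity) (by positivity) (by field_simp)
      have : q₂ = (1 + l)⁻¹ • b + (l * (1 + l)⁻¹) • q₁ := by
        rw [hq₂def, smul_add, smul_smul, mul_comm]
      rwa [this]
    have hq2v : (1 + l) • q₂ = b + l • q₁ := smul_inv_smul₀ (ne_of_gt h1l) _
    -- step 2: use hBC on q₂ + r
    have hstep2 : (1 + l) • (q₂ + r) ∈ B + C + l • (KB + KC) := by
      rw [hBC]
      exact Set.smul_mem_smul_set (Set.add_mem_add hq₂ hr)
    obtain ⟨bc, hbc, lw2, hlw2, heq2⟩ := Set.mem_add.1 hstep2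
    obtain ⟨b₂, hb₂, c, hc, rfl⟩ := Set.mem_add.1 hbc
    obtain ⟨w2, hw2, rfl⟩ := hlw2
    obtain ⟨q₃, hq₃, r₁, hr₁, rfl⟩ := Set.mem_add.1 hw2
    -- assemble
    refine Set.mem_add.2 ⟨a + b₂ + c,
      Set.add_mem_add (Set.add_mem_add ha hb₂) hc,
      l • (p₁ + q₃ + r₁),
      Set.smul_mem_smul_set (Set.add_mem_add (Set.add_mem_add hp₁ hq₃) hr₁), ?_⟩
    calc a + b₂ + c + l • (p₁ + q₃ + r₁)
        = (a + l • p₁) + (b₂ + c + l • (q₃ + r₁)) := by module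
      _ = (a + l • p₁) + (1 + l) • (q₂ + r) := by rw [heq2]
      _ = (a + l • p₁) + ((1 + l) • q₂ + (1 + l) • r) := by module
      _ = (a + l • p₁) + ((b + l • q₁) + (1 + l) • r) := by rw [hq2v]
      _ = (a + b + l • (p₁ + q₁)) + (1 + l) • r := by module
      _ = (1 + l) • (p + q) + (1 + l) • r := by rw [heq1]
      _ = (1 + l) • (p + q + r) := by module

end Aux

/-- **Refined monotonicity of Schneider's non-convexity index** (Theorem 5.1 of
Fradelizi–Madiman–Marsiglietti–Zvavitch): for nonempty compact sets `A, B, C ⊆ ℝⁿ`,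
`c(A+B+C) ≤ max{c(A+B), c(B+C)}` (Minkowski sums). -/
theorem schneiderIndex_sum_three_le_max {n : ℕ}
    (A B C : Set (EuclideanSpace ℝ (Fin n)))
    (hA : A.Nonempty) (hB : B.Nonempty) (hC : C.Nonempty)
    (hcA : IsCompact A) (hcB : IsCompact B) (hcC : IsCompact C) :
    schneiderIndex (A + B + C) ≤ max (schneiderIndex (A + B)) (schneiderIndex (B + C)) := by
  unfold schneiderIndex
  set T1 : Set ℝ := {l : ℝ | 0 ≤ l ∧ Convex ℝ (A + B + l • convexHull ℝ (A + B))} with hT1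
  set T2 : Set ℝ := {l : ℝ | 0 ≤ l ∧ Convex ℝ (B + C + l • convexHull ℝ (B + C))} with hT2
  set T3 : Set ℝ := {l : ℝ | 0 ≤ l ∧ Convex ℝ (A + B + C + l • convexHull ℝ (A + B + C))}
    with hT3
  have hb1 : BddBelow T1 := ⟨0, fun x hx => hx.1⟩
  have hb2 : BddBelow T2 := ⟨0, fun x hx => hx.1⟩
  have hb3 : BddBelow T3 := ⟨0, fun x hx => hx.1⟩
  have hne1 : T1.Nonempty := ⟨(n : ℝ), Nat.cast_nonneg n, aux_dim_mem (hA.add hB)⟩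
  have hne2 : T2.Nonempty := ⟨(n : ℝ), Nat.cast_nonneg n, aux_dim_mem (hB.add hC)⟩
  by_contra hcon
  push_neg at hcon
  set M := max (sInf T1) (sInf T2) with hM
  set m := (M + sInf T3) / 2 with hm
  have hMm : M < m := by rw [hm]; linarith
  have hm3 : m < sInf T3 := by rw [hm]; linarith
  have hmem1 : m ∈ T1 := by
    have hlt : sInf T1 < m := lt_of_le_of_lt (le_max_left _ _) hMm
    obtain ⟨x, hx, hxm⟩ := (csInf_lt_iff hb1 hne1).1 hlt
    exact ⟨le_trans hx.1 hxm.le, aux_mono hx.1 hxm.le hx.2⟩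
  have hmem2 : m ∈ T2 := by
    have hlt : sInf T2 < m := lt_of_le_of_lt (le_max_right _ _) hMm
    obtain ⟨x, hx, hxm⟩ := (csInf_lt_iff hb2 hne2).1 hlt
    exact ⟨le_trans hx.1 hxm.le, aux_mono hx.1 hxm.le hx.2⟩
  have hmem3 : m ∈ T3 := ⟨hmem1.1, aux_key hmem1.1 hmem1.2 hmem2.2⟩
  exact absurd (csInf_le hb3 hmem3) (not_le.2 hm3)
end

section
/- Let A be a nonempty compact subset of ℝⁿ and let k ≥ 2 be an integer. Then c(A(k)) ≤ ((k−1)/k) · c(A(k−1)). -/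
open MeasureTheory Finset
open scoped Pointwise

section Helpers

variable {E : Type*} [AddCommGroup E] [Module ℝ E]

lemma sum_mem_smul_convex {K : Set E} (hK : Convex ℝ K) (hKne : K.Nonempty)
    {p : ℕ} (b : Fin p → E) (hb : ∀ i, b i ∈ K) :
    ∑ i, b i ∈ (p : ℝ) • K := by
  induction p with
  | zero =>
    rw [show ((0:ℕ):ℝ) = 0 by norm_num, Set.zero_smul_set hKne]
    simp
  | succ p ih =>
    rw [Fin.sum_univ_succ]
    have hsplit : ((p + 1 : ℕ) : ℝ) • K = (1 : ℝ) • K + (p : ℝ) • K := by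
      rw [← hK.add_smul one_pos.le (by positivity)]
      norm_num [add_comm]
    rw [hsplit]
    exact Set.add_mem_add ⟨b 0, hb 0, one_smul _ _⟩ (ih _ fun i => hb i.succ)

lemma hull_smul_mem_of_convex {B : Set E} {l : ℝ}
    (h : Convex ℝ (B + l • convexHull ℝ B)) {x : E} (hx : x ∈ convexHull ℝ B) :
    (1 + l) • x ∈ B + l • convexHull ℝ B := by
  have hEq : B + l • convexHull ℝ B = convexHull ℝ B + l • convexHull ℝ B := by
    rw [← h.convexHull_eq, convexHull_add, convexHull_smul,
      (convex_convexHull ℝ B).convexHull_eq]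
  rw [hEq, add_smul, one_smul]
  exact Set.add_mem_add hx (Set.smul_mem_smul_set hx)

lemma convex_add_smul_hull' {B : Set E} {c : ℝ} (hc : 0 ≤ c)
    (h : ∀ x ∈ convexHull ℝ B, (1 + c) • x ∈ B + c • convexHull ℝ B) :
    Convex ℝ (B + c • convexHull ℝ B) := by
  have hc1 : (0:ℝ) < 1 + c := by linarith
  have key : B + c • convexHull ℝ B = (1 + c) • convexHull ℝ B := by
    apply Set.Subset.antisymm
    · rintro z ⟨u, hu, v, ⟨y, hy, rfl⟩, rfl⟩
      refine ⟨(1 + c)⁻¹ • (u + c • y), ?_, ?_⟩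
      · have := (convex_convexHull ℝ B) (subset_convexHull ℝ B hu) hy
          (a := (1 + c)⁻¹) (b := (1 + c)⁻¹ * c) (by positivity) (by positivity)
          (by field_simp)
        simpa [smul_add, smul_smul] using this
      · show (1 + c) • ((1 + c)⁻¹ • (u + c • y)) = u + c • y
        rw [smul_smul, mul_inv_cancel₀ hc1.ne', one_smul]
    · rintro z ⟨x, hx, rfl⟩
      exact h x hx
  rw [key]
  exact (convex_convexHull ℝ B).smul _

end Helpers

/-- Schneider's easy bound via Carathéodory: `B + n·conv(B)` is always convex in `ℝⁿ`. -/
lemma schneider_dim_mem {n : ℕ} (B : Set (EuclideanSpace ℝ (Fin n))) :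
    Convex ℝ (B + (n : ℝ) • convexHull ℝ B) := by
  apply convex_add_smul_hull' (by positivity)
  intro x hx
  classical
  obtain ⟨ι, hι, z, w, hzB, hai, hw0, hw1, hxw⟩ := eq_pos_convex_span_of_mem_convexHull hx
  have hKx : x ∈ convexHull ℝ B := hx
  have hcard : (Fintype.card ι : ℝ) ≤ (n : ℝ) + 1 := by
    have h1 := hai.card_le_finrank_succ
    have h2 : Module.finrank ℝ (vectorSpan ℝ (Set.range z)) ≤ n := by
      simpa [finrank_euclideanSpace_fin] using
        (Submodule.finrank_le (vectorSpan ℝ (Set.range z)))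
    exact_mod_cast h1.trans (by omega)
  have hne : Nonempty ι := by
    by_contra h
    simp [not_nonempty_iff.mp h] at hw1
  have hcard_pos : 0 < (Fintype.card ι : ℝ) := by
    exact_mod_cast Fintype.card_pos
  -- find index with large weight
  obtain ⟨i0, -, hi0⟩ : ∃ i0 ∈ Finset.univ, (Fintype.card ι : ℝ)⁻¹ ≤ w i0 := by
    apply Finset.exists_le_of_sum_le Finset.univ_nonempty
    rw [hw1, Finset.sum_const, Finset.card_univ, nsmul_eq_mul,
      mul_inv_cancel₀ hcard_pos.ne']
  have hwi0 : ((n : ℝ) + 1)⁻¹ ≤ w i0 :=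
    le_trans (by apply inv_anti₀ hcard_pos hcard) hi0
  rcases Nat.eq_zero_or_pos n with rfl | hn
  · -- trivial 0-dimensional case
    have hcard1 : Fintype.card ι = 1 := le_antisymm (by exact_mod_cast hcard) Fintype.card_pos
    have hsub : Subsingleton (EuclideanSpace ℝ (Fin 0)) := by
      constructor; intro a b; ext i; exact absurd i.2 (by omega)
    refine ⟨z i0, hzB ⟨i0, rfl⟩, 0, ?_, ?_⟩
    · rw [show ((0:ℕ):ℝ) = 0 by norm_num, Set.zero_smul_set ⟨x, hx⟩]; simp
    · exact @Subsingleton.elim _ hsub _ _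
  have hn0 : ((n : ℝ)) ≠ 0 := by positivity
  -- the remainder point
  set v : ι → ℝ := fun i => ((n : ℝ) + 1) * w i - if i = i0 then 1 else 0 with hv
  have hv0 : ∀ i, 0 ≤ v i := by
    intro i
    by_cases hi : i = i0
    · subst hi
      have h1 : (1:ℝ) ≤ ((n:ℝ)+1) * w i := by
        rw [← div_le_iff₀' (by positivity)]
        simpa [one_div] using hwi0
      have h2 : v i = ((n:ℝ)+1) * w i - 1 := by simp [hv]
      linarith
    · simp only [hv, if_neg hi, sub_zero]
      exact mul_nonneg (by positivity) (hw0 i).le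
  have hvsum : ∑ i, v i = (n : ℝ) := by
    simp [hv, Finset.sum_sub_distrib, ← Finset.mul_sum, hw1, Finset.sum_ite_eq']
  set y : EuclideanSpace ℝ (Fin n) := ∑ i, ((n:ℝ)⁻¹ * v i) • z i with hy
  have hyK : y ∈ convexHull ℝ B := by
    apply (convex_convexHull ℝ B).sum_mem
    · intro i _; have := hv0 i; positivity
    · rw [← Finset.mul_sum, hvsum, inv_mul_cancel₀ hn0]
    · intro i _; exact subset_convexHull ℝ B (hzB ⟨i, rfl⟩)
  refine ⟨z i0, hzB ⟨i0, rfl⟩, (n:ℝ) • y, Set.smul_mem_smul_set hyK, ?_⟩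
  have hny : (n:ℝ) • y = ((n:ℝ)+1) • x - z i0 := by
    rw [hy, Finset.smul_sum]
    have : ∀ i ∈ Finset.univ, (n:ℝ) • (((n:ℝ)⁻¹ * v i) • z i)
        = (((n:ℝ)+1) * w i) • z i - (if i = i0 then (1:ℝ) else 0) • z i := by
      intro i _
      rw [smul_smul, ← mul_assoc, mul_inv_cancel₀ hn0, one_mul, hv, sub_smul]
    rw [Finset.sum_congr rfl this, Finset.sum_sub_distrib]
    congr 1
    · rw [← hxw, Finset.smul_sum]
      exact Finset.sum_congr rfl fun i _ => (smul_smul _ _ _).symm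
    · simp [ite_smul]
  rw [hny]
  module

lemma minkAvg_subset_hull {n : ℕ} {A : Set (EuclideanSpace ℝ (Fin n))} {m : ℕ} (hm : m ≠ 0) :
    minkAvg A m ⊆ convexHull ℝ A := by
  rintro x ⟨a, ha, rfl⟩
  rw [Finset.smul_sum]
  exact (convex_convexHull ℝ A).sum_mem (fun i _ => by positivity)
    (by simp [Finset.sum_const, Finset.card_univ]
        exact mul_inv_cancel₀ (by exact_mod_cast hm))
    (fun i _ => subset_convexHull ℝ A (ha i))

lemma subset_minkAvg {n : ℕ} {A : Set (EuclideanSpace ℝ (Fin n))} {m : ℕ} (hm : m ≠ 0) :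
    A ⊆ minkAvg A m := by
  intro x hx
  refine ⟨fun _ => x, fun _ => hx, ?_⟩
  rw [Finset.sum_const, Finset.card_univ, Fintype.card_fin, ← Nat.cast_smul_eq_nsmul ℝ,
    smul_smul, inv_mul_cancel₀ (by exact_mod_cast hm), one_smul]

lemma convexHull_minkAvg {n : ℕ} {A : Set (EuclideanSpace ℝ (Fin n))} {m : ℕ} (hm : m ≠ 0) :
    convexHull ℝ (minkAvg A m) = convexHull ℝ A :=
  le_antisymm (convexHull_min (minkAvg_subset_hull hm) (convex_convexHull ℝ A))
    (convexHull_mono (subset_minkAvg hm))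

/-- The key step: convexity of `A(k-1) + λ·conv(A)` implies convexity of
`A(k) + ((k-1)λ/k)·conv(A)`. -/
lemma key_step {n : ℕ} {A : Set (EuclideanSpace ℝ (Fin n))} (hne : A.Nonempty)
    {j : ℕ} {l : ℝ} (hl : 0 ≤ l)
    (hconv : Convex ℝ (minkAvg A (j + 1) + l • convexHull ℝ (minkAvg A (j + 1)))) :
    Convex ℝ (minkAvg A (j + 2) +
      ((((j : ℝ) + 1) * l / ((j : ℝ) + 2)) • convexHull ℝ (minkAvg A (j + 2)))) := by
  set K := convexHull ℝ A with hKdef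
  have hK : Convex ℝ K := convex_convexHull ℝ A
  have hKne : K.Nonempty := hne.mono (subset_convexHull ℝ A)
  have hconvm : convexHull ℝ (minkAvg A (j + 1)) = K := convexHull_minkAvg (by omega)
  have hconvk : convexHull ℝ (minkAvg A (j + 2)) = K := convexHull_minkAvg (by omega)
  set mr : ℝ := (j : ℝ) + 1 with hmr
  have hmr0 : mr ≠ 0 := by positivity
  have hmr1 : mr + 1 ≠ 0 := by positivity
  have H : ∀ x ∈ K, ∃ (b : Fin (j + 1) → EuclideanSpace ℝ (Fin n))
      (y : EuclideanSpace ℝ (Fin n)), (∀ i, b i ∈ A) ∧ y ∈ K ∧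
      (1 + l) • x = mr⁻¹ • ∑ i, b i + l • y := by
    intro x hx
    have hmem := hull_smul_mem_of_convex hconv (x := x) (by rw [hconvm]; exact hx)
    obtain ⟨p, hp, q, hq, hpq⟩ := hmem
    obtain ⟨b, hb, rfl⟩ := hp
    rw [hconvm] at hq
    obtain ⟨y, hy, rfl⟩ := hq
    refine ⟨b, y, hb, hy, ?_⟩
    rw [← hpq, hmr]
    norm_num
  have hc0 : 0 ≤ mr * l / (mr + 1) := by positivity
  rw [show ((j : ℝ) + 2) = mr + 1 by rw [hmr]; ring]
  apply convex_add_smul_hull' hc0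
  rw [hconvk]
  intro x hx
  obtain ⟨b, y, hb, hy, h1⟩ := H x hx
  rw [Fin.sum_univ_succ] at h1
  set S1 : EuclideanSpace ℝ (Fin n) := ∑ i : Fin j, b i.succ with hS1def
  -- step A : x + S1 + (mr*l) • y ∈ (mr * (1+l)) • K
  have hw : x + S1 + (mr * l) • y ∈ (mr * (1 + l)) • K := by
    have hsplit : (mr * (1 + l)) • K = ((1 : ℝ) • K + (j : ℝ) • K) + (mr * l) • K := by
      rw [show mr * (1 + l) = ((1 : ℝ) + (j : ℝ)) + mr * l by rw [hmr]; ring,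
        hK.add_smul (by positivity) (by positivity),
        hK.add_smul one_pos.le (by positivity)]
    rw [hsplit]
    refine Set.add_mem_add (Set.add_mem_add ⟨x, hx, one_smul _ _⟩ ?_) (Set.smul_mem_smul_set hy)
    exact sum_mem_smul_convex hK hKne _ fun i => subset_convexHull ℝ A (hb i.succ)
  obtain ⟨z, hz, hzw⟩ := hw
  obtain ⟨c, u, hc, hu, h3⟩ := H z hz
  have e1 : b 0 + S1 = (mr * (1 + l)) • x - (mr * l) • y := by
    have h1' := congrArg (fun v : EuclideanSpace ℝ (Fin n) => mr • v) h1
    simp only [smul_add, smul_smul] at h1'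
    rw [mul_inv_cancel₀ hmr0, one_smul] at h1'
    linear_combination (norm := module) (-1 : ℝ) • h1'
  have e3 : (∑ i, c i) = (mr * (1 + l)) • z - (mr * l) • u := by
    have h3' := congrArg (fun v : EuclideanSpace ℝ (Fin n) => mr • v) h3
    simp only [smul_add, smul_smul] at h3'
    rw [mul_inv_cancel₀ hmr0, one_smul] at h3'
    linear_combination (norm := module) (-1 : ℝ) • h3'
  have e4 : b 0 + ∑ i, c i = (mr * (1 + l) + 1) • x - (mr * l) • u := by
    linear_combination (norm := module) e1 + e3 + hzw
  refine ⟨((j + 2 : ℕ) : ℝ)⁻¹ • ∑ i, (Fin.cons (b 0) c : Fin (j + 2) → EuclideanSpace ℝ (Fin n)) i,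
    ⟨Fin.cons (b 0) c, ?_, rfl⟩,
    (mr * l / (mr + 1)) • u, Set.smul_mem_smul_set hu, ?_⟩
  · intro i
    refine Fin.cases ?_ ?_ i
    · simpa using hb 0
    · intro i; simpa using hc i
  have hsum : ∑ i, (Fin.cons (b 0) c : Fin (j + 2) → EuclideanSpace ℝ (Fin n)) i
      = b 0 + ∑ i, c i := by
    rw [Fin.sum_univ_succ]; simp
  rw [hsum, e4, show ((j + 2 : ℕ) : ℝ) = mr + 1 by rw [hmr]; push_cast; ring]
  match_scalars <;> (field_simp; try ring)

/-- **Strict monotonicity of Schneider's index along Minkowski averages** (Theorem 5.3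
of Fradelizi–Madiman–Marsiglietti–Zvavitch): for a nonempty compact `A ⊆ ℝⁿ` and
`k ≥ 2`, `c(A(k)) ≤ ((k-1)/k) · c(A(k-1))`. -/
theorem schneiderIndex_minkAvg_le {n : ℕ} (A : Set (EuclideanSpace ℝ (Fin n)))
    (hne : A.Nonempty) (hcpt : IsCompact A) (k : ℕ) (hk : 2 ≤ k) :
    schneiderIndex (minkAvg A k) ≤
      (((k : ℝ) - 1) / k) * schneiderIndex (minkAvg A (k - 1)) := by
  obtain ⟨j, rfl⟩ : ∃ j, k = j + 2 := ⟨k - 2, by omega⟩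
  have hk1 : j + 2 - 1 = j + 1 := by omega
  rw [hk1]
  set r : ℝ := ((j : ℝ) + 1) / ((j : ℝ) + 2) with hrdef
  have hr : (0 : ℝ) < r := by rw [hrdef]; positivity
  have hcast : (((j + 2 : ℕ) : ℝ) - 1) / ((j + 2 : ℕ) : ℝ) = r := by
    rw [hrdef]; push_cast; ring
  rw [hcast]
  set S : Set ℝ :=
    {l : ℝ | 0 ≤ l ∧ Convex ℝ (minkAvg A (j + 1) + l • convexHull ℝ (minkAvg A (j + 1)))}
    with hS
  have hSne : S.Nonempty := ⟨(n : ℝ), Nat.cast_nonneg n, schneider_dim_mem _⟩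
  have hSk_bdd : BddBelow {l : ℝ | 0 ≤ l ∧
      Convex ℝ (minkAvg A (j + 2) + l • convexHull ℝ (minkAvg A (j + 2)))} :=
    ⟨0, fun l hl => hl.1⟩
  have hmain : ∀ l ∈ S, schneiderIndex (minkAvg A (j + 2)) ≤ r * l := by
    intro l hl
    apply csInf_le hSk_bdd
    refine ⟨mul_nonneg hr.le hl.1, ?_⟩
    have hkey := key_step hne hl.1 hl.2
    rw [show r * l = ((j : ℝ) + 1) * l / ((j : ℝ) + 2) by rw [hrdef]; ring]
    exact hkey
  have hfinal : schneiderIndex (minkAvg A (j + 2)) / r ≤ sInf S :=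
    le_csInf hSne fun l hl => (div_le_iff₀ hr).mpr (by rw [mul_comm]; exact hmain l hl)
  have hSdef : schneiderIndex (minkAvg A (j + 1)) = sInf S := rfl
  rw [hSdef, mul_comm]
  exact (div_le_iff₀ hr).mp hfinal
end

section
/- (Shapley–Folkman lemma) Let A_1, …, A_k be nonempty subsets of ℝⁿ with k ≥ n + 1, and let a ∈ ∑_{i ∈ [k]} conv(A_i) (Minkowski sum of the convex hulls). Then there exists a set of indices I ⊆ [k] of cardinality at most n such that a ∈ ∑_{i ∈ I} conv(A_i) + ∑_{i ∈ [k]∖I} A_i. -/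
/-!
Lift each `A i` to `A i × {eᵢ}` in `E × ℝ^ι`. If `a = ∑ xᵢ` with `xᵢ ∈ conv (A i)`, then
`(a, 𝟙) / |ι|` lies in the convex hull of the lifted sets, so by Carathéodory it is a positive
combination of affinely independent lifted points. These lie in the hyperplane where the
`ℝ^ι`-coordinates sum to `1`, so there are at most `dim E + |ι|` of them. Reading off the
`eᵢ`-coordinate, every index `i` is hit by at least one of them, hence at most `dim E` indices are
hit twice or more; an index hit exactly once contributes a point of `A i` itself.
-/

open Finset
open scoped Pointwise

theorem Function.Surjective.card_filter_one_lt_card_fiber_add_card_le {α β : Type*} [Fintype α]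
    [Fintype β] [DecidableEq β] {g : α → β} (hg : Function.Surjective g) :
    #{b | 1 < #{a | g a = b}} + Fintype.card β ≤ Fintype.card α := by
  calc #{b | 1 < #{a | g a = b}} + Fintype.card β
      = ∑ b, ((if 1 < #{a | g a = b} then 1 else 0) + 1) := by
        rw [sum_add_distrib, card_filter]; simp
    _ ≤ ∑ b, #{a | g a = b} := by
        gcongr with b
        obtain ⟨a, rfl⟩ := hg b
        have : 0 < #{a' | g a' = g a} := card_pos.2 ⟨a, by simp⟩
        split_ifs <;> omega
    _ = Fintype.card α := (card_eq_sum_card_fiberwise fun a _ => mem_univ (g a)).symm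

theorem AffineIndependent.card_le_finrank_of_forall_eq {k V ι : Type*} [Field k]
    [AddCommGroup V] [Module k V] [FiniteDimensional k V] [Fintype ι] {p : ι → V}
    (hp : AffineIndependent k p) (f : V →ₗ[k] k) {c : k} (hc : c ≠ 0)
    (hfp : ∀ i, f (p i) = c) : Fintype.card ι ≤ Module.finrank k V := by
  cases isEmpty_or_nonempty ι
  · simp
  have hspan : vectorSpan k (Set.range p) ≤ LinearMap.ker f := by
    rw [vectorSpan_def, Submodule.span_le]
    rintro _ ⟨_, ⟨i, rfl⟩, _, ⟨j, rfl⟩, rfl⟩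
    simp [hfp]
  have hker : LinearMap.ker f ≠ ⊤ := fun h => by
    obtain ⟨i⟩ := ‹Nonempty ι›
    simpa [LinearMap.ker_eq_top.1 h, eq_comm, hc] using hfp i
  have := (Submodule.finrank_mono hspan).trans_lt (Submodule.finrank_lt hker)
  have := hp.card_le_finrank_succ
  omega

section ShapleyFolkman

variable {E ι κ : Type*}

def shapleyFolkmanLift [DecidableEq ι] (A : ι → Set E) : Set (E × (ι → ℝ)) :=
  ⋃ i, A i ×ˢ {Pi.single i 1}

theorem mem_shapleyFolkmanLift [DecidableEq ι] {A : ι → Set E} {p : E × (ι → ℝ)} :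
    p ∈ shapleyFolkmanLift A ↔ ∃ i, p.1 ∈ A i ∧ p.2 = Pi.single i 1 := by
  simp [shapleyFolkmanLift]

variable [AddCommGroup E] [Module ℝ E]

theorem sum_smul_mem_of_card_le_one {s : Finset κ} {A : Set E} {c : κ → ℝ} {v : κ → E}
    (hs : #s ≤ 1) (hc : ∑ j ∈ s, c j = 1) (hv : ∀ j ∈ s, v j ∈ A) :
    ∑ j ∈ s, c j • v j ∈ A := by
  obtain ⟨j, rfl⟩ : ∃ j, s = {j} :=
    card_eq_one.1 (le_antisymm hs (card_pos.2 (nonempty_of_sum_ne_zero (f := c) (by simp [hc]))))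
  simp_all

theorem sum_smul_mem_sum_convexHull_add_sum [Fintype ι] [Fintype κ] [DecidableEq ι]
    (A : ι → Set E) {g : κ → ι} {v : κ → E} (hv : ∀ j, v j ∈ A (g j)) {c : κ → ℝ}
    (hc : ∀ j, 0 ≤ c j) (hcg : ∀ i, ∑ j with g j = i, c j = 1) {I : Finset ι}
    (hI : ∀ i ∉ I, #{j | g j = i} ≤ 1) :
    ∑ j, c j • v j ∈ (∑ i ∈ I, convexHull ℝ (A i)) + ∑ i ∈ Iᶜ, A i := by
  have hfib : ∀ i, ∀ j ∈ ({j | g j = i} : Finset κ), v j ∈ A i := by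
    intro i j hj
    rw [(mem_filter.1 hj).2.symm]
    exact hv j
  rw [← sum_fiberwise univ g, ← sum_add_sum_compl I]
  refine Set.add_mem_add (Set.finsetSum_mem_finsetSum _ _ _ fun i _ => ?_)
    (Set.finsetSum_mem_finsetSum _ _ _ fun i hi => ?_)
  · exact (convex_convexHull ℝ (A i)).sum_mem (fun j _ => hc j) (hcg i)
      fun j hj => subset_convexHull ℝ _ (hfib i j hj)
  · exact sum_smul_mem_of_card_le_one (hI i (mem_compl.1 hi)) (hcg i) (hfib i)

theorem inv_card_smul_mem_convexHull_shapleyFolkmanLift [Fintype ι] [Nonempty ι] [DecidableEq ι]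
    (A : ι → Set E) {a : E} (ha : a ∈ ∑ i, convexHull ℝ (A i)) :
    (Fintype.card ι : ℝ)⁻¹ • ((a, 1) : E × (ι → ℝ)) ∈ convexHull ℝ (shapleyFolkmanLift A) := by
  obtain ⟨x, hx, rfl⟩ := (Set.mem_fintype_sum _ _).1 ha
  have hlift : ∀ i, (x i, (Pi.single i 1 : ι → ℝ)) ∈ convexHull ℝ (shapleyFolkmanLift A) :=
    fun i => convexHull_mono (Set.subset_iUnion _ i) <| by
      rw [convexHull_prod, convexHull_singleton]
      exact ⟨hx i, rfl⟩
  convert (convex_convexHull ℝ _).centerMass_mem (t := univ) (w := fun _ => (1 : ℝ)) (by simp)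
    (by simpa using Fintype.card_pos) fun i _ => hlift i using 1
  rw [centerMass]
  simp only [sum_const, card_univ, nsmul_eq_mul, mul_one, one_smul]
  rw [← prod_mk_sum, univ_sum_single]
  rfl

theorem exists_card_le_finrank_mem_sum_convexHull_add_sum_of_affineIndependent
    [FiniteDimensional ℝ E] [Fintype ι] [DecidableEq ι] [Fintype κ] (A : ι → Set E) {a : E}
    {z : κ → E × (ι → ℝ)} (hzA : Set.range z ⊆ shapleyFolkmanLift A) (hz : AffineIndependent ℝ z)
    {c : κ → ℝ} (hc : ∀ j, 0 ≤ c j) (hcz : ∑ j, c j • z j = (a, 1)) :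
    ∃ I : Finset ι, #I ≤ Module.finrank ℝ E ∧
      a ∈ (∑ i ∈ I, convexHull ℝ (A i)) + ∑ i ∈ Iᶜ, A i := by
  choose g hz₁ hz₂ using fun j => mem_shapleyFolkmanLift.1 (hzA ⟨j, rfl⟩)
  have hcard : Fintype.card κ ≤ Module.finrank ℝ E + Fintype.card ι := by
    have := hz.card_le_finrank_of_forall_eq
      (∑ i, (LinearMap.proj i).comp (LinearMap.snd ℝ E (ι → ℝ))) one_ne_zero
      fun j => by simp [hz₂]
    simpa [Module.finrank_prod] using this
  have hcg : ∀ i, ∑ j with g j = i, c j = 1 := fun i => by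
    simpa [Prod.snd_sum, hz₂, Pi.single_apply, sum_filter, eq_comm] using
      congrFun (congrArg Prod.snd hcz) i
  have hg : Function.Surjective g := fun i => by
    obtain ⟨j, hj, -⟩ := exists_ne_zero_of_sum_ne_zero (by rw [hcg i]; exact one_ne_zero)
    exact ⟨j, (mem_filter.1 hj).2⟩
  have hI := hg.card_filter_one_lt_card_fiber_add_card_le
  refine ⟨({i | 1 < #{j | g j = i}} : Finset ι), by omega, ?_⟩
  have ha : a = ∑ j, c j • (z j).1 := by simpa [Prod.fst_sum] using congrArg Prod.fst hcz.symm
  rw [ha]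
  exact sum_smul_mem_sum_convexHull_add_sum A hz₁ hc hcg (by simp)

theorem exists_card_le_finrank_mem_sum_convexHull_add_sum [FiniteDimensional ℝ E] [Fintype ι]
    [DecidableEq ι] (A : ι → Set E) {a : E} (ha : a ∈ ∑ i, convexHull ℝ (A i)) :
    ∃ I : Finset ι, #I ≤ Module.finrank ℝ E ∧
      a ∈ (∑ i ∈ I, convexHull ℝ (A i)) + ∑ i ∈ Iᶜ, A i := by
  cases isEmpty_or_nonempty ι
  · exact ⟨∅, by simp, by simpa using ha⟩
  obtain ⟨κ, _, z, w, hzA, hz, hw, -, hwz⟩ :=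
    eq_pos_convex_span_of_mem_convexHull (inv_card_smul_mem_convexHull_shapleyFolkmanLift A ha)
  have hk : (Fintype.card ι : ℝ) ≠ 0 := by positivity
  refine exists_card_le_finrank_mem_sum_convexHull_add_sum_of_affineIndependent A hzA hz
    (c := fun j => Fintype.card ι * w j) (fun j => mul_nonneg (by positivity) (hw j).le) ?_
  simp_rw [mul_smul, ← smul_sum, hwz, smul_inv_smul₀ hk]

end ShapleyFolkman

theorem shapley_folkman_general {n k : ℕ}
    (A : Fin k → Set (EuclideanSpace ℝ (Fin n)))
    (a : EuclideanSpace ℝ (Fin n)) (ha : a ∈ ∑ i, convexHull ℝ (A i)) :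
    ∃ I : Finset (Fin k), I.card ≤ n ∧
      a ∈ (∑ i ∈ I, convexHull ℝ (A i)) + ∑ i ∈ Iᶜ, A i := by
  simpa using exists_card_le_finrank_mem_sum_convexHull_add_sum A ha

/-- **The Shapley–Folkman lemma** (Lemma 2.3 of
Fradelizi–Madiman–Marsiglietti–Zvavitch): let `A 1, …, A k` be nonempty subsets of
`ℝⁿ` with `k ≥ n + 1`, and let `a ∈ ∑_{i ∈ [k]} conv(A i)` (Minkowski sum). Then there
is a set of indices `I ⊆ [k]` of cardinality at most `n` such that
`a ∈ ∑_{i ∈ I} conv(A i) + ∑_{i ∉ I} A i`. -/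
theorem shapley_folkman {n k : ℕ} (hk : n + 1 ≤ k)
    (A : Fin k → Set (EuclideanSpace ℝ (Fin n))) (hne : ∀ i, (A i).Nonempty)
    (a : EuclideanSpace ℝ (Fin n)) (ha : a ∈ ∑ i, convexHull ℝ (A i)) :
    ∃ I : Finset (Fin k), I.card ≤ n ∧
      a ∈ (∑ i ∈ I, convexHull ℝ (A i)) + ∑ i ∈ Iᶜ, A i :=
  shapley_folkman_general A a ha
end

section
/- For any nonempty compact set A ⊆ ℝⁿ, one has d(A) ≤ R(A) · c(A). -/
open MeasureTheory Metric
open scoped Pointwise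

/-- The Hausdorff distance from a set `A ⊆ ℝⁿ` to its convex hull:
`d(A) = inf {r > 0 : conv(A) ⊆ A + r·B₂ⁿ}`, with `B₂ⁿ` the closed Euclidean unit
ball and the sum a Minkowski sum. -/
noncomputable def hausdorffDistToConv {n : ℕ} (A : Set (EuclideanSpace ℝ (Fin n))) : ℝ :=
  sInf {r : ℝ | 0 < r ∧
    convexHull ℝ A ⊆ A + r • closedBall (0 : EuclideanSpace ℝ (Fin n)) 1}

/-- The circumradius of `A ⊆ ℝⁿ`: the radius of the smallest Euclidean ball
containing `A`. -/
noncomputable def circumradius {n : ℕ} (A : Set (EuclideanSpace ℝ (Fin n))) : ℝ :=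
  sInf {r : ℝ | ∃ x, A ⊆ closedBall x r}

/-!
By Carathéodory, a point `z` of `conv A ⊆ ℝⁿ` is a convex combination of at most `n + 1` points
of `A`, one of which, `a`, carries weight at least `1 / (n + 1)`; then `(n + 1) z - a` is `n` times
a point of `conv A`. Hence `A + n conv A = (n + 1) conv A` is convex and `c(A)` is the infimum of
a nonempty set.

If `A + λ conv A` is convex it contains `conv A + λ conv A`. Projecting the centre of a ball
`B(x, r) ⊇ A` onto the closure of `conv A` gives, for every `r' > r`, some `v ∈ conv A` with
`conv A ⊆ B(v, r')`; for `z ∈ conv A` write `z + λ v = a + λ y` with `a ∈ A`, `y ∈ conv A`, so that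
`‖z - a‖ = λ ‖y - v‖ ≤ λ r'`.
-/

open Set Module Filter Topology

lemma exists_one_le_mul_of_sum_eq_one {ι : Type*} [Fintype ι] {w : ι → ℝ} (hw : ∑ i, w i = 1)
    {m : ℝ} (hm : (Fintype.card ι : ℝ) ≤ m) : ∃ j, 1 ≤ m * w j := by
  have hι : (Finset.univ : Finset ι).Nonempty :=
    Finset.nonempty_of_sum_ne_zero (by rw [hw]; exact one_ne_zero)
  have hm₀ : 0 < m := lt_of_lt_of_le (by exact_mod_cast Finset.card_pos.mpr hι) hm
  obtain ⟨j, -, hj⟩ : ∃ j ∈ Finset.univ, m⁻¹ ≤ w j := by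
    refine Finset.exists_le_of_sum_le hι ?_
    rw [Finset.sum_const, Finset.card_univ, nsmul_eq_mul, hw, ← div_eq_mul_inv]
    exact (div_le_one hm₀).mpr hm
  exact ⟨j, (inv_le_iff_one_le_mul₀' hm₀).mp hj⟩

lemma smul_sum_mem_add_smul_convexHull_s14 {E ι : Type*} [AddCommGroup E] [Module ℝ E] [Fintype ι]
    {s : Set E} {w : ι → ℝ} {p : ι → E} (hw₀ : ∀ i, 0 ≤ w i) (hw₁ : ∑ i, w i = 1)
    (hp : ∀ i, p i ∈ s) {t : ℝ} (ht : 0 < t) {j : ι} (hj : 1 ≤ (1 + t) * w j) :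
    (1 + t) • ∑ i, w i • p i ∈ s + t • convexHull ℝ s := by
  classical
  set v : ι → ℝ := fun i => ((1 + t) * w i - if i = j then 1 else 0) / t
  have hv₀ : ∀ i, 0 ≤ v i := by
    intro i
    rcases eq_or_ne i j with rfl | hij
    · simpa [v] using div_nonneg (sub_nonneg.mpr hj) ht.le
    · simp only [v, hij, if_false, sub_zero]
      exact div_nonneg (mul_nonneg (by linarith) (hw₀ i)) ht.le
  have hv₁ : ∑ i, v i = 1 := by
    simp only [v, ← Finset.sum_div, Finset.sum_sub_distrib, ← Finset.mul_sum, hw₁]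
    simp [ht.ne']
  have hsplit : (1 + t) • ∑ i, w i • p i = p j + t • ∑ i, v i • p i := by
    simp only [v, Finset.smul_sum, smul_smul, mul_div_cancel₀ _ ht.ne', sub_smul,
      Finset.sum_sub_distrib]
    simp
  rw [hsplit]
  exact add_mem_add (hp j)
    (smul_mem_smul_set (mem_convexHull_of_exists_fintype v p hv₀ hv₁ hp rfl))

lemma add_smul_convexHull_eq {E : Type*} [AddCommGroup E] [Module ℝ E] [FiniteDimensional ℝ E]
    (s : Set E) {t : ℝ} (ht₀ : 0 < t) (ht : (finrank ℝ E : ℝ) ≤ t) :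
    s + t • convexHull ℝ s = (1 + t) • convexHull ℝ s := by
  refine subset_antisymm ?_ ?_
  · rw [(convex_convexHull ℝ s).add_smul zero_le_one ht₀.le, one_smul]
    exact add_subset_add_right (subset_convexHull ℝ s)
  · rintro _ ⟨z, hz, rfl⟩
    obtain ⟨ι, _, p, w, hps, hind, hw₀, hw₁, rfl⟩ := eq_pos_convex_span_of_mem_convexHull hz
    have hcard : (Fintype.card ι : ℝ) ≤ 1 + t := by
      have := hind.card_le_finrank_succ.trans (Nat.succ_le_succ (Submodule.finrank_le _))
      rw [add_comm]
      exact (Nat.cast_le.mpr this).trans (by push_cast; linarith)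
    obtain ⟨j, hj⟩ := exists_one_le_mul_of_sum_eq_one hw₁ hcard
    exact smul_sum_mem_add_smul_convexHull_s14 (fun i => (hw₀ i).le) hw₁
      (fun i => hps (mem_range_self i)) ht₀ hj

lemma convex_add_smul_convexHull {E : Type*} [AddCommGroup E] [Module ℝ E] [FiniteDimensional ℝ E]
    (s : Set E) {t : ℝ} (ht₀ : 0 < t) (ht : (finrank ℝ E : ℝ) ≤ t) :
    Convex ℝ (s + t • convexHull ℝ s) := by
  rw [add_smul_convexHull_eq s ht₀ ht]
  exact (convex_convexHull ℝ s).smul _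

lemma IsComplete.exists_mem_subset_closedBall_of_convex {F : Type*} [NormedAddCommGroup F]
    [InnerProductSpace ℝ F] {C : Set F} (hC : IsComplete C) (hconv : Convex ℝ C)
    (hne : C.Nonempty) {x : F} {r : ℝ} (hr : C ⊆ closedBall x r) :
    ∃ v ∈ C, C ⊆ closedBall v r := by
  obtain ⟨v, hv, hmin⟩ := exists_norm_eq_iInf_of_complete_convex hne hC hconv x
  have hobtuse := (norm_eq_iInf_iff_real_inner_le_zero hconv hv).mp hmin
  refine ⟨v, hv, fun w hw => ?_⟩
  -- the angle at `v` in the triangle `x v w` is obtuse, so `w` is closer to `v` than to `x`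
  have hsq : ‖w - v‖ ^ 2 ≤ ‖w - x‖ ^ 2 := by
    have := norm_sub_sq_real (w - v) (x - v)
    rw [sub_sub_sub_cancel_right, real_inner_comm] at this
    nlinarith [hobtuse w hw, sq_nonneg ‖x - v‖]
  rw [mem_closedBall, dist_eq_norm]
  exact (pow_le_pow_iff_left₀ (norm_nonneg _) (norm_nonneg _) two_ne_zero).mp hsq
    |>.trans ((dist_eq_norm w x).symm.trans_le (hr hw))

lemma Convex.exists_mem_subset_closedBall {F : Type*} [NormedAddCommGroup F]
    [InnerProductSpace ℝ F] [CompleteSpace F] {K : Set F} (hconv : Convex ℝ K)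
    (hne : K.Nonempty) {x : F} {r r' : ℝ} (hr : K ⊆ closedBall x r) (hrr' : r < r') :
    ∃ v ∈ K, K ⊆ closedBall v r' := by
  obtain ⟨v₀, hv₀, hball⟩ := isClosed_closure.isComplete.exists_mem_subset_closedBall_of_convex
    hconv.closure hne.closure (closure_minimal hr isClosed_closedBall)
  obtain ⟨v, hv, hvv₀⟩ := Metric.mem_closure_iff.mp hv₀ (r' - r) (sub_pos.mpr hrr')
  refine ⟨v, hv, fun w hw => ?_⟩
  have := hball (subset_closure hw)
  rw [mem_closedBall] at this ⊢
  linarith [dist_triangle w v₀ v]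

lemma convexHull_subset_add_closedBall {E : Type*} [SeminormedAddCommGroup E] [NormedSpace ℝ E]
    {s : Set E} {l : ℝ} (hl : 0 ≤ l) (hconv : Convex ℝ (s + l • convexHull ℝ s)) {v : E}
    (hv : v ∈ convexHull ℝ s) {ρ : ℝ} (hρ : convexHull ℝ s ⊆ closedBall v ρ) :
    convexHull ℝ s ⊆ s + closedBall 0 (l * ρ) := by
  have hsum : convexHull ℝ s + l • convexHull ℝ s ⊆ s + l • convexHull ℝ s :=
    calc convexHull ℝ s + l • convexHull ℝ s = convexHull ℝ (s + l • s) := by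
          rw [convexHull_add, convexHull_smul]
      _ ⊆ s + l • convexHull ℝ s :=
          convexHull_min (add_subset_add_left (smul_set_mono (subset_convexHull ℝ s))) hconv
  intro z hz
  obtain ⟨a, ha, _, ⟨y, hy, rfl⟩, hay⟩ := hsum (add_mem_add hz (smul_mem_smul_set hv))
  have hza : z - a = l • (y - v) := by
    change a + l • y = z + l • v at hay
    linear_combination (norm := module) (-1 : ℝ) • hay
  refine ⟨a, ha, z - a, ?_, add_sub_cancel a z⟩
  rw [mem_closedBall_zero_iff, hza, norm_smul, Real.norm_of_nonneg hl, ← dist_eq_norm]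
  exact mul_le_mul_of_nonneg_left (hρ hy) hl

lemma hausdorffDistToConv_le {n : ℕ} {A : Set (EuclideanSpace ℝ (Fin n))} {δ : ℝ} (hδ : 0 ≤ δ)
    (h : convexHull ℝ A ⊆ A + closedBall 0 δ) : hausdorffDistToConv A ≤ δ := by
  refine le_of_forall_gt_imp_ge_of_dense fun c hc => csInf_le ⟨0, fun r hr => hr.1.le⟩
    ⟨hδ.trans_lt hc, h.trans (add_subset_add_left ?_)⟩
  rw [smul_unitClosedBall_of_nonneg (hδ.trans hc.le)]
  exact closedBall_subset_closedBall hc.le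

lemma le_csInf_mul_csInf {S T : Set ℝ} (hS : S.Nonempty) (hS' : BddBelow S) (hT : T.Nonempty)
    (hT' : BddBelow T) {d : ℝ} (h : ∀ s ∈ S, ∀ t ∈ T, d ≤ s * t) : d ≤ sInf S * sInf T := by
  have hclosed : IsClosed {p : ℝ × ℝ | d ≤ p.1 * p.2} :=
    isClosed_le continuous_const (continuous_fst.mul continuous_snd)
  have hmem : (sInf S, sInf T) ∈ closure (S ×ˢ T) := by
    rw [closure_prod_eq]
    exact ⟨csInf_mem_closure hS hS', csInf_mem_closure hT hT'⟩
  exact closure_minimal (fun p hp => h p.1 hp.1 p.2 hp.2) hclosed hmem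

lemma hausdorffDistToConv_le_mul {n : ℕ} {A : Set (EuclideanSpace ℝ (Fin n))} (hne : A.Nonempty)
    {l : ℝ} (hl : 0 ≤ l) (hconv : Convex ℝ (A + l • convexHull ℝ A)) {x : EuclideanSpace ℝ (Fin n)}
    {r : ℝ} (hr : A ⊆ closedBall x r) : hausdorffDistToConv A ≤ r * l := by
  have hK : convexHull ℝ A ⊆ closedBall x r := convexHull_min hr (convex_closedBall x r)
  have hgt : ∀ r' > r, hausdorffDistToConv A ≤ r' * l := by
    intro r' hr'
    obtain ⟨v, hv, hball⟩ :=
      (convex_convexHull ℝ A).exists_mem_subset_closedBall hne.convexHull hK hr'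
    rw [mul_comm]
    exact hausdorffDistToConv_le (mul_nonneg hl (nonneg_of_mem_closedBall (hball hv)))
      (convexHull_subset_add_closedBall hl hconv hv hball)
  exact ge_of_tendsto ((continuous_id.mul continuous_const).tendsto r |>.mono_left
    nhdsWithin_le_nhds) (eventually_nhdsWithin_of_forall (s := Ioi r) hgt)

/-- **Lemma 2.25 of Fradelizi–Madiman–Marsiglietti–Zvavitch**: for every nonempty
compact `A ⊆ ℝⁿ`, `d(A) ≤ R(A) · c(A)`. -/
theorem hausdorffDistToConv_le_circumradius_mul_schneiderIndex {n : ℕ}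
    (A : Set (EuclideanSpace ℝ (Fin n))) (hne : A.Nonempty) (hcpt : IsCompact A) :
    hausdorffDistToConv A ≤ circumradius A * schneiderIndex A := by
  have hR : {r : ℝ | ∃ x, A ⊆ closedBall x r}.Nonempty :=
    let ⟨r, hr⟩ := hcpt.isBounded.subset_closedBall 0
    ⟨r, 0, hr⟩
  have hR' : BddBelow {r : ℝ | ∃ x, A ⊆ closedBall x r} :=
    ⟨0, fun _ ⟨_, hx⟩ => nonneg_of_mem_closedBall (hx hne.some_mem)⟩
  have hc : {l : ℝ | 0 ≤ l ∧ Convex ℝ (A + l • convexHull ℝ A)}.Nonempty :=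
    ⟨n + 1, by positivity, convex_add_smul_convexHull A (by positivity) (by simp)⟩
  have hc' : BddBelow {l : ℝ | 0 ≤ l ∧ Convex ℝ (A + l • convexHull ℝ A)} :=
    ⟨0, fun _ hl => hl.1⟩
  exact le_csInf_mul_csInf hR hR' hc hc' fun _ ⟨_, hx⟩ _ ⟨hl, hconv⟩ =>
    hausdorffDistToConv_le_mul hne hl hconv hx
end

section
/- Let K be a compact convex body in ℝⁿ containing 0 in its interior, and let A, B be nonempty compact sets in ℝⁿ. Then d^{(K)}(A + B) ≤ d^{(K)}(A) + d^{(K)}(B), where A + B is the Minkowski sum. -/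
open MeasureTheory
open scoped Pointwise

/-- The Hausdorff distance from a set `A ⊆ ℝⁿ` to its convex hull, measured with
respect to the (possibly nonsymmetric) norm with unit ball `K`:
`d^{(K)}(A) = inf {r > 0 : conv(A) ⊆ A + r·K}` (Minkowski sum). -/
noncomputable def distToConv {n : ℕ} (K A : Set (EuclideanSpace ℝ (Fin n))) : ℝ :=
  sInf {r : ℝ | 0 < r ∧ convexHull ℝ A ⊆ A + r • K}

/-! Since `conv (A + B) = conv A + conv B` and `r • K + s • K = (r + s) • K` for convex `K`,
admissible radii for `A` and `B` add up to an admissible radius for `A + B`. Boundedness of the sets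
and `0 ∈ interior K` make the sets of admissible radii nonempty, so their infima add. -/

section
variable {E : Type*} [NormedAddCommGroup E] [NormedSpace ℝ E] {K A B : Set E}

theorem nonempty_setOf_convexHull_subset_add_smul (hK : K ∈ nhds 0)
    (hA : Bornology.IsBounded A) : {r : ℝ | 0 < r ∧ convexHull ℝ A ⊆ A + r • K}.Nonempty := by
  rcases A.eq_empty_or_nonempty with rfl | ⟨a, ha⟩
  · exact ⟨1, one_pos, by simp⟩
  have hbdd : Bornology.IsBounded (-a +ᵥ convexHull ℝ A) :=
    (isBounded_convexHull.mpr hA).vadd (-a)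
  obtain ⟨r, hr, habs⟩ := ((NormedSpace.isVonNBounded_iff ℝ).mpr hbdd hK).exists_pos
  refine ⟨r, hr, fun x hx => ⟨a, ha, x - a, ?_, add_sub_cancel a x⟩⟩
  refine habs r (by rw [Real.norm_of_nonneg hr.le]) ?_
  exact ⟨x, hx, by simp [sub_eq_neg_add]⟩

theorem convexHull_add_subset_add_smul (hK : Convex ℝ K) {r s : ℝ} (hr : 0 ≤ r) (hs : 0 ≤ s)
    (hA : convexHull ℝ A ⊆ A + r • K) (hB : convexHull ℝ B ⊆ B + s • K) :
    convexHull ℝ (A + B) ⊆ A + B + (r + s) • K := by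
  rw [convexHull_add, hK.add_smul hr hs, add_add_add_comm]
  exact Set.add_subset_add hA hB

end

theorem distToConv_add_le_general {n : ℕ} (K : Set (EuclideanSpace ℝ (Fin n)))
    (hKconv : Convex ℝ K) (hK0 : (0 : EuclideanSpace ℝ (Fin n)) ∈ interior K)
    (A B : Set (EuclideanSpace ℝ (Fin n)))
    (hcA : IsCompact A) (hcB : IsCompact B) :
    distToConv K (A + B) ≤ distToConv K A + distToConv K B := by
  have hK : K ∈ nhds 0 := mem_interior_iff_mem_nhds.mp hK0
  have hneA := nonempty_setOf_convexHull_subset_add_smul hK hcA.isBounded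
  have hneB := nonempty_setOf_convexHull_subset_add_smul hK hcB.isBounded
  have hbdd : ∀ C : Set (EuclideanSpace ℝ (Fin n)),
      BddBelow {r : ℝ | 0 < r ∧ convexHull ℝ C ⊆ C + r • K} :=
    fun _ => ⟨0, fun _ hr => hr.1.le⟩
  calc distToConv K (A + B)
      ≤ sInf ({r : ℝ | 0 < r ∧ convexHull ℝ A ⊆ A + r • K} +
          {s : ℝ | 0 < s ∧ convexHull ℝ B ⊆ B + s • K}) := by
        refine csInf_le_csInf (hbdd _) (Set.add_nonempty.mpr ⟨hneA, hneB⟩) ?_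
        rintro _ ⟨r, ⟨hr, hrA⟩, s, ⟨hs, hsB⟩, rfl⟩
        exact ⟨add_pos hr hs, convexHull_add_subset_add_smul hKconv hr.le hs.le hrA hsB⟩
    _ = distToConv K A + distToConv K B := csInf_add hneA (hbdd A) hneB (hbdd B)

/-- **Subadditivity of the Hausdorff distance to the convex hull** (Theorem 7.1 of
Fradelizi–Madiman–Marsiglietti–Zvavitch): for a compact convex body `K ⊆ ℝⁿ`
containing `0` in its interior, and nonempty compact sets `A, B ⊆ ℝⁿ`,
`d^{(K)}(A + B) ≤ d^{(K)}(A) + d^{(K)}(B)`. -/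
theorem distToConv_add_le {n : ℕ} (K : Set (EuclideanSpace ℝ (Fin n)))
    (hKcpt : IsCompact K) (hKconv : Convex ℝ K) (hK0 : (0 : EuclideanSpace ℝ (Fin n)) ∈ interior K)
    (A B : Set (EuclideanSpace ℝ (Fin n)))
    (hA : A.Nonempty) (hB : B.Nonempty) (hcA : IsCompact A) (hcB : IsCompact B) :
    distToConv K (A + B) ≤ distToConv K A + distToConv K B :=
  distToConv_add_le_general K hKconv hK0 A B hcA hcB
end

section
/- Let K be a compact convex body in ℝⁿ containing 0 in its interior, and let A, B, C be nonempty compact sets in ℝⁿ. Then d^{(K)}(A + B + C) ≤ d^{(K)}(A + B) + d^{(K)}(B + C), where the sums of sets are Minkowski sums. -/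
open MeasureTheory
open scoped Pointwise

lemma aux_nonempty {n : ℕ} (K : Set (EuclideanSpace ℝ (Fin n)))
    (hK0 : (0 : EuclideanSpace ℝ (Fin n)) ∈ interior K)
    (A : Set (EuclideanSpace ℝ (Fin n))) (hA : A.Nonempty) (hcA : IsCompact A) :
    {r : ℝ | 0 < r ∧ convexHull ℝ A ⊆ A + r • K}.Nonempty := by
  obtain ⟨a, ha⟩ := hA
  obtain ⟨ε, hε, hball⟩ := Metric.isOpen_iff.mp isOpen_interior 0 hK0
  have hbd : Bornology.IsBounded (convexHull ℝ A) := isBounded_convexHull.mpr hcA.isBounded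
  obtain ⟨R, hR⟩ := hbd.subset_closedBall 0
  have hR0 : 0 ≤ R := by
    have := hR (subset_convexHull ℝ A ha)
    simpa using (norm_nonneg a).trans (mem_closedBall_zero_iff.mp this)
  set r : ℝ := (2 * R + 1) / ε with hr
  have hrpos : 0 < r := by positivity
  refine ⟨r, hrpos, fun x hx => ?_⟩
  have hxa : ‖x - a‖ ≤ 2 * R := by
    have h1 : ‖x‖ ≤ R := mem_closedBall_zero_iff.mp (hR hx)
    have h2 : ‖a‖ ≤ R := mem_closedBall_zero_iff.mp (hR (subset_convexHull ℝ A ha))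
    calc ‖x - a‖ ≤ ‖x‖ + ‖a‖ := norm_sub_le _ _
      _ ≤ 2 * R := by linarith
  have hmem : (1 / r) • (x - a) ∈ K := by
    apply interior_subset
    apply hball
    rw [Metric.mem_ball, dist_zero_right, norm_smul, Real.norm_eq_abs,
      abs_of_pos (by positivity : (0:ℝ) < 1 / r)]
    have h3 : (1 / r) * ‖x - a‖ ≤ (1 / r) * (2 * R) :=
      mul_le_mul_of_nonneg_left hxa (by positivity)
    have hlt : (1 / r) * (2 * R) < ε := by
      have h4 : 1 / r = ε / (2 * R + 1) := by rw [hr, one_div_div]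
      rw [h4, div_mul_eq_mul_div, div_lt_iff₀ (by positivity)]
      nlinarith
    linarith
  have heq : r • ((1 / r) • (x - a)) = x - a := by
    rw [smul_smul, mul_one_div, div_self hrpos.ne', one_smul]
  exact ⟨a, ha, x - a, heq ▸ Set.smul_mem_smul_set hmem, by show a + (x - a) = x; rw [add_comm, sub_add_cancel]⟩

lemma aux_key_s17 {n : ℕ} (K : Set (EuclideanSpace ℝ (Fin n))) (hKconv : Convex ℝ K)
    (A B C : Set (EuclideanSpace ℝ (Fin n))) {r s : ℝ}
    (hr : r ∈ {r : ℝ | 0 < r ∧ convexHull ℝ (A + B) ⊆ A + B + r • K})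
    (hs : s ∈ {r : ℝ | 0 < r ∧ convexHull ℝ (B + C) ⊆ B + C + r • K}) :
    r + s ∈ {r : ℝ | 0 < r ∧ convexHull ℝ (A + B + C) ⊆ A + B + C + r • K} := by
  refine ⟨by linarith [hr.1, hs.1], ?_⟩
  calc convexHull ℝ (A + B + C) = convexHull ℝ (A + B) + convexHull ℝ C := by
        rw [convexHull_add]
    _ ⊆ (A + B + r • K) + convexHull ℝ C := by gcongr; exact hr.2
    _ = A + (B + convexHull ℝ C) + r • K := by abel
    _ ⊆ A + (convexHull ℝ B + convexHull ℝ C) + r • K := by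
        gcongr
        exact subset_convexHull ℝ B
    _ = A + convexHull ℝ (B + C) + r • K := by rw [convexHull_add]
    _ ⊆ A + (B + C + s • K) + r • K := by gcongr; exact hs.2
    _ = A + B + C + (r • K + s • K) := by abel
    _ = A + B + C + (r + s) • K := by rw [hKconv.add_smul (le_of_lt hr.1) (le_of_lt hs.1)]

/-- **Theorem 7.2 of Fradelizi–Madiman–Marsiglietti–Zvavitch**: for a compact convex
body `K ⊆ ℝⁿ` containing `0` in its interior, and nonempty compact sets
`A, B, C ⊆ ℝⁿ`, `d^{(K)}(A + B + C) ≤ d^{(K)}(A + B) + d^{(K)}(B + C)`. -/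
theorem distToConv_sum_three_le {n : ℕ} (K : Set (EuclideanSpace ℝ (Fin n)))
    (hKcpt : IsCompact K) (hKconv : Convex ℝ K) (hK0 : (0 : EuclideanSpace ℝ (Fin n)) ∈ interior K)
    (A B C : Set (EuclideanSpace ℝ (Fin n)))
    (hA : A.Nonempty) (hB : B.Nonempty) (hC : C.Nonempty)
    (hcA : IsCompact A) (hcB : IsCompact B) (hcC : IsCompact C) :
    distToConv K (A + B + C) ≤ distToConv K (A + B) + distToConv K (B + C) := by
  have hAB := aux_nonempty K hK0 (A + B) (hA.add hB) (hcA.add hcB)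
  have hBC := aux_nonempty K hK0 (B + C) (hB.add hC) (hcB.add hcC)
  have hbdd : ∀ X : Set (EuclideanSpace ℝ (Fin n)),
      BddBelow {r : ℝ | 0 < r ∧ convexHull ℝ X ⊆ X + r • K} :=
    fun X => ⟨0, fun x hx => hx.1.le⟩
  unfold distToConv
  have key : ∀ r ∈ {r : ℝ | 0 < r ∧ convexHull ℝ (A + B) ⊆ A + B + r • K},
      ∀ s ∈ {r : ℝ | 0 < r ∧ convexHull ℝ (B + C) ⊆ B + C + r • K},
      sInf {r : ℝ | 0 < r ∧ convexHull ℝ (A + B + C) ⊆ A + B + C + r • K} ≤ r + s := by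
    intro r hr s hs
    exact csInf_le (hbdd _) (aux_key_s17 K hKconv A B C hr hs)
  have h1 : sInf {r : ℝ | 0 < r ∧ convexHull ℝ (A + B + C) ⊆ A + B + C + r • K}
      - sInf {r : ℝ | 0 < r ∧ convexHull ℝ (B + C) ⊆ B + C + r • K}
      ≤ sInf {r : ℝ | 0 < r ∧ convexHull ℝ (A + B) ⊆ A + B + r • K} := by
    apply le_csInf hAB
    intro r hr
    have h2 : sInf {r : ℝ | 0 < r ∧ convexHull ℝ (A + B + C) ⊆ A + B + C + r • K} - r
        ≤ sInf {r : ℝ | 0 < r ∧ convexHull ℝ (B + C) ⊆ B + C + r • K} := by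
      apply le_csInf hBC
      intro s hs
      linarith [key r hr s hs]
    linarith
  linarith
end
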